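/- arXiv:1207.2923 — 7 statements merged into one kernel-verified Lean document; each statement's English description precedes it below -/
import Mathlib

section
/- Let k ≥ 2, n > k, and let F ⊆ 2^[n] be an (n−1)-trace k-Sperner family. Suppose F₁ ⊊ F₂ ⊊ ... ⊊ F_k are members of F with |F_{i+1} \ F_i| = 1 for all 1 ≤ i ≤ k−1, let x ∈ F₁ and z ∉ F_k. Then any maximal chain C of 2^[n] that contains the k+1 sets (F₁ − x) + z, (F₂ − x) + z, ..., (F_k − x) + z, and F_k + z satisfies |C ∩ F| ≤ k − 2. -/
def IsKSperner {α : Type*} (k : ℕ) (G : Finset (Finset α)) : Prop :=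
  ¬ ∃ c : Fin (k+1) → Finset α, (∀ i j : Fin (k+1), i < j → c i ⊂ c j) ∧ ∀ i, c i ∈ G

def maxChains (n : ℕ) : Finset (Finset (Finset (Fin n))) :=
  Finset.univ.powerset.filter (fun C => C.card = n + 1 ∧ ∀ A ∈ C, ∀ B ∈ C, A ⊆ B ∨ B ⊆ A)

theorem stmt8 (n k : ℕ) (hk : 2 ≤ k) (hnk : k < n) (F : Finset (Finset (Fin n)))
    (hF : ∀ y : Fin n, IsKSperner k (F.image (fun A => A.erase y)))
    (c : Fin k → Finset (Fin n)) (hmem : ∀ i, c i ∈ F)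
    (hchain : ∀ i j : Fin k, i < j → c i ⊂ c j)
    (hstep : ∀ i : ℕ, (h : i + 1 < k) → ((c ⟨i + 1, h⟩) \ (c ⟨i, by omega⟩)).card = 1)
    (x z : Fin n) (hx : x ∈ c ⟨0, by omega⟩) (hz : z ∉ c ⟨k - 1, by omega⟩)
    (C : Finset (Finset (Fin n))) (hC : C ∈ maxChains n)
    (h1 : ∀ i : Fin k, insert z ((c i).erase x) ∈ C)
    (h2 : insert z (c ⟨k - 1, by omega⟩) ∈ C) :
    (F ∩ C).card ≤ k - 2 := by
  classical
  have hk0 : 0 < k := by omega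
  have hmono : ∀ i j : Fin k, (i : ℕ) ≤ (j : ℕ) → c i ⊆ c j := by
    intro i j hij
    rcases eq_or_lt_of_le hij with h | h
    · have : i = j := Fin.ext h
      rw [this]
    · exact (hchain i j h).subset
  have hxall : ∀ i : Fin k, x ∈ c i := fun i => hmono ⟨0, hk0⟩ i (Nat.zero_le _) hx
  have hzall : ∀ i : Fin k, z ∉ c i := by
    intro i hzi
    have hi := i.isLt
    exact hz (hmono i ⟨k - 1, by omega⟩ (by exact (by omega : (i : ℕ) ≤ k - 1)) hzi)
  have hxz : x ≠ z := by
    intro h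
    exact hz (h ▸ hxall ⟨k - 1, by omega⟩)
  -- cardinalities along the chain
  have hcards : ∀ m (h : m < k), (c ⟨m, h⟩).card = (c ⟨0, hk0⟩).card + m := by
    intro m
    induction m with
    | zero => intro h; rfl
    | succ p ih =>
      intro h
      have hp : p < k := by omega
      have hsub : c ⟨p, hp⟩ ⊆ c ⟨p + 1, h⟩ := hmono _ _ (by simp)
      have hd := hstep p h
      rw [Finset.card_sdiff_of_subset hsub] at hd
      have hle := Finset.card_le_card hsub
      have := ih hp
      omega
  have hDcard : ∀ i : Fin k, (insert z ((c i).erase x)).card = (c i).card := by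
    intro i
    have hpos : 0 < (c i).card := Finset.card_pos.mpr ⟨x, hxall i⟩
    rw [Finset.card_insert_of_notMem (fun hm => hzall i (Finset.mem_of_mem_erase hm)),
      Finset.card_erase_of_mem (hxall i)]
    omega
  -- chain facts about C
  have hCcmp : ∀ A ∈ C, ∀ B ∈ C, A ⊆ B ∨ B ⊆ A :=
    (Finset.mem_filter.mp hC).2.2
  have hCsub : ∀ A ∈ C, ∀ B ∈ C, A.card ≤ B.card → A ⊆ B := by
    intro A hA B hB hle
    rcases hCcmp A hA B hB with h | h
    · exact h
    · rw [Finset.eq_of_subset_of_card_le h hle]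
  set m := (c ⟨0, hk0⟩).card with hm
  have key : F ∩ C ⊆ (Finset.Icc 1 (k - 2)).image
      (fun t => insert z ((c ⟨min t (k - 1), by omega⟩).erase x)) := by
    intro G hG
    obtain ⟨hGF, hGC⟩ := Finset.mem_inter.mp hG
    have hD0C := h1 ⟨0, hk0⟩
    have hDlC := h1 ⟨k - 1, by omega⟩
    by_cases hlow : G.card ≤ m
    · exfalso
      have hsub : G ⊆ insert z ((c ⟨0, hk0⟩).erase x) :=
        hCsub G hGC _ hD0C (by rw [hDcard]; exact hlow)
      have hxG : x ∉ G := by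
        intro hxG
        rcases Finset.mem_insert.mp (hsub hxG) with h | h
        · exact hxz h
        · exact (Finset.notMem_erase x _) h
      apply hF z
      refine ⟨fun j => if h : (j : ℕ) = 0 then G.erase z
        else c ⟨(j : ℕ) - 1, by have := j.isLt; omega⟩, ?_, ?_⟩
      · intro i j hij
        have hij' : (i : ℕ) < (j : ℕ) := hij
        have hj : (j : ℕ) ≠ 0 := by omega
        by_cases hi : (i : ℕ) = 0
        · simp only [dif_pos hi, dif_neg hj]
          constructor
          · intro a ha
            obtain ⟨haz, haG⟩ := Finset.mem_erase.mp ha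
            rcases Finset.mem_insert.mp (hsub haG) with h | h
            · exact absurd h haz
            · exact hmono ⟨0, hk0⟩ _ (Nat.zero_le _) (Finset.mem_of_mem_erase h)
          · intro hcon
            exact hxG (Finset.mem_of_mem_erase (hcon (hxall _)))
        · simp only [dif_neg hi, dif_neg hj]
          exact hchain _ _ (by exact (by omega : (i : ℕ) - 1 < (j : ℕ) - 1))
      · intro j
        by_cases hj : (j : ℕ) = 0
        · simp only [dif_pos hj]
          exact Finset.mem_image.mpr ⟨G, hGF, rfl⟩
        · simp only [dif_neg hj]
          exact Finset.mem_image.mpr ⟨c _, hmem _,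
            Finset.erase_eq_of_notMem (hzall _)⟩
    · by_cases hhigh : m + (k - 1) ≤ G.card
      · exfalso
        have hsup : insert z ((c ⟨k - 1, by omega⟩).erase x) ⊆ G := by
          apply hCsub _ hDlC G hGC
          rw [hDcard, hcards]
          exact hhigh
        apply hF x
        refine ⟨fun j => if h : (j : ℕ) < k then (c ⟨(j : ℕ), h⟩).erase x
          else G.erase x, ?_, ?_⟩
        · intro i j hij
          have hij' : (i : ℕ) < (j : ℕ) := hij
          have hi : (i : ℕ) < k := by have := j.isLt; omega
          have hsubik : ∀ (hik : (i:ℕ) < k), (c ⟨(i:ℕ), hik⟩).erase x ⊆ G.erase x := by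
            intro hik a ha
            obtain ⟨hax, hac⟩ := Finset.mem_erase.mp ha
            have : a ∈ c ⟨k - 1, by omega⟩ := hmono ⟨(i : ℕ), hik⟩ ⟨k - 1, by omega⟩ (by exact (by omega : (i : ℕ) ≤ k - 1)) hac
            exact Finset.mem_erase.mpr ⟨hax,
              hsup (Finset.mem_insert.mpr (Or.inr (Finset.mem_erase.mpr ⟨hax, this⟩)))⟩
          by_cases hjk : (j : ℕ) < k
          · simp only [dif_pos hi, dif_pos hjk]
            have hcc := hchain ⟨(i:ℕ), hi⟩ ⟨(j:ℕ), hjk⟩ (by exact (by omega : (i : ℕ) < (j : ℕ)))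
            constructor
            · exact Finset.erase_subset_erase x hcc.subset
            · intro hcon
              obtain ⟨a, haj, hai⟩ := Finset.exists_of_ssubset hcc
              have hax : a ≠ x := fun h => hai (h ▸ hxall _)
              exact hai (Finset.mem_of_mem_erase (hcon (Finset.mem_erase.mpr ⟨hax, haj⟩)))
          · simp only [dif_pos hi, dif_neg hjk]
            constructor
            · exact hsubik hi
            · intro hcon
              have hzG : z ∈ G.erase x :=
                Finset.mem_erase.mpr ⟨fun h => hxz h.symm, hsup (Finset.mem_insert_self _ _)⟩
              exact hzall _ (Finset.mem_of_mem_erase (hcon hzG))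
        · intro j
          by_cases hj : (j : ℕ) < k
          · simp only [dif_pos hj]
            exact Finset.mem_image.mpr ⟨c _, hmem _, rfl⟩
          · simp only [dif_neg hj]
            exact Finset.mem_image.mpr ⟨G, hGF, rfl⟩
      · -- middle case
        push_neg at hlow hhigh
        set t := G.card - m with ht
        have ht1 : 1 ≤ t := by omega
        have htk : t ≤ k - 2 := by omega
        have htlt : t < k := by omega
        have hGeq : G = insert z ((c ⟨t, htlt⟩).erase x) := by
          have h1t := h1 ⟨t, htlt⟩
          have hcardEq : G.card = (insert z ((c ⟨t, htlt⟩).erase x)).card := by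
            rw [hDcard, hcards]
            omega
          rcases hCcmp G hGC _ h1t with h | h
          · exact Finset.eq_of_subset_of_card_le h (le_of_eq hcardEq.symm)
          · exact (Finset.eq_of_subset_of_card_le h hcardEq.le).symm
        refine Finset.mem_image.mpr ⟨t, Finset.mem_Icc.mpr ⟨ht1, htk⟩, ?_⟩
        have hmin : min t (k - 1) = t := by omega
        rw [hGeq]
        congr 1
        · exact (Fin.ext hmin.symm : (⟨t, htlt⟩ : Fin k) = ⟨min t (k-1), by omega⟩) ▸ rfl
  calc (F ∩ C).card ≤ ((Finset.Icc 1 (k - 2)).image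
      (fun t => insert z ((c ⟨min t (k - 1), by omega⟩).erase x))).card :=
        Finset.card_le_card key
    _ ≤ (Finset.Icc 1 (k - 2)).card := Finset.card_image_le
    _ = k - 2 := by rw [Nat.card_Icc]; omega
end

section
/- Let k ≥ 2, n > k, and let F ⊆ 2^[n] be an (n−1)-trace k-Sperner family. Suppose F₁ ⊊ ... ⊊ F_k ∈ F form a chain with |F₂ \ F₁| ≥ 2 (so ℓ = 1 in the type II-ℓ classification), let x ∈ F₁, z ∉ F_k, and let σ₁, ..., σ_m be an ordering of the m ≥ 2 elements of F₂ \ F₁. Then any maximal chain C of 2^[n] containing all the sets (F₁ − x) + σ₁, F₁ + σ₁, (F₁ + σ₁) + σ₂, ..., F₂ − σ_m, (F₂ − σ_m) + z, and F_j + z for 2 ≤ j ≤ k, satisfies |C ∩ F| ≤ k − 2. -/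
open Finset

lemma IsChain.exists_strictMono_fin {β : Type*} [PartialOrder β] {S : Finset β}
    (hS : IsChain (· ≤ ·) (S : Set β)) {r : ℕ} (hr : r ≤ #S) :
    ∃ f : Fin r → β, StrictMono f ∧ ∀ i, f i ∈ S := by
  classical
  let _ := hS.linearOrder
  let e := (univ : Finset (S : Set β)).orderEmbOfFin (k := #S) (by simp)
  exact ⟨fun i => (e (Fin.castLE hr i)).1,
    fun a b hab => e.strictMono (Fin.strictMono_castLE hr hab), fun i => (e _).2⟩

variable {α : Type*}

lemma IsKSperner.false_of_ssubset_of_ssubset {G : Finset (Finset α)} {j : ℕ}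
    (hG : IsKSperner (j + 2) G) {p q : Finset α} {t : Fin (j + 1) → Finset α}
    (hpq : p ⊂ q) (hqt : q ⊂ t 0) (ht : StrictMono t) (hp : p ∈ G) (hq : q ∈ G)
    (htG : ∀ i, t i ∈ G) : False := by
  refine hG ⟨Fin.cons p (Fin.cons q t), fun a b hab => ((ht.vecCons hqt).vecCons ?_) hab, ?_⟩
  · exact hpq.trans_le ((ht.vecCons hqt).monotone (Fin.zero_le _))
  · exact Fin.cases hp (Fin.cases hq htG)

lemma IsChain.subset_of_card_le {S : Set (Finset α)} (hS : IsChain (· ⊆ ·) S)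
    {A B : Finset α} (hA : A ∈ S) (hB : B ∈ S) (h : #A ≤ #B) : A ⊆ B := by
  rcases eq_or_ne A B with rfl | hAB
  · rfl
  rcases hS hA hB hAB with hAB | hBA
  · exact hAB
  · exact (eq_of_subset_of_card_le hBA h).ge

variable [DecidableEq α]

lemma Finset.erase_ssubset_erase_of_ssubset {A B : Finset α} {y : α} (h : A ⊂ B)
    (hy : y ∈ A ∨ y ∉ B) : A.erase y ⊂ B.erase y := by
  rcases hy with hyA | hyB
  · obtain ⟨b, hbB, hbA⟩ := exists_of_ssubset h
    exact ssubset_iff_of_subset (erase_subset_erase y h.subset) |>.2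
      ⟨b, mem_erase.2 ⟨by rintro rfl; exact hbA hyA, hbB⟩, fun hb => hbA (mem_of_mem_erase hb)⟩
  · rwa [erase_eq_of_notMem hyB, erase_eq_of_notMem fun hyA => hyB (h.subset hyA)]

lemma StrictMono.finset_erase {ι : Type*} [Preorder ι] {f : ι → Finset α} (hf : StrictMono f)
    {y : α} (hy : (∀ i, y ∈ f i) ∨ ∀ i, y ∉ f i) : StrictMono fun i => (f i).erase y :=
  fun _ _ hij => erase_ssubset_erase_of_ssubset (hf hij) (hy.imp (· _) (· _))

lemma Finset.ssubset_erase_of_card_add_two_le {A B : Finset α} {y : α} (hAB : A ⊆ B)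
    (hyA : y ∉ A) (h : #A + 2 ≤ #B) : A ⊂ B.erase y :=
  (subset_erase.2 ⟨hAB, hyA⟩).ssubset_of_ne fun hA => by
    have := pred_card_le_card_erase (s := B) (a := y)
    rw [← hA] at this
    omega

section TraceSperner

variable {F : Finset (Finset α)} {j : ℕ} {c : Fin (j + 2) → Finset α}

lemma false_of_erase_ssubset_bottom (hF : ∀ y, IsKSperner (j + 2) (F.image (·.erase y)))
    (hc : StrictMono c) (hcF : ∀ i, c i ∈ F) (hgap : #(c 0) + 2 ≤ #(c 1)) {y : α}
    (hy₁ : y ∈ c 1) (hy₀ : y ∉ c 0) {A : Finset α} (hA : A ∈ F) (hAy : A.erase y ⊂ c 0) :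
    False := by
  have hc₀ : (c 0).erase y = c 0 := erase_eq_of_notMem hy₀
  refine (hF y).false_of_ssubset_of_ssubset (q := (c 0).erase y)
    (t := fun i => (c i.succ).erase y) (by rwa [hc₀]) ?_
    ((hc.comp Fin.strictMono_succ).finset_erase (.inl fun i => hc.monotone ?_ hy₁))
    (mem_image_of_mem _ hA) (mem_image_of_mem _ (hcF 0)) fun i => mem_image_of_mem _ (hcF _)
  · rw [hc₀]
    exact ssubset_erase_of_card_add_two_le (hc.monotone (Fin.zero_le 1)) hy₀ hgap
  · exact Fin.succ_le_succ_iff.2 (Fin.zero_le i)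

lemma false_of_erase_between (hF : ∀ y, IsKSperner (j + 2) (F.image (·.erase y)))
    (hc : StrictMono c) (hcF : ∀ i, c i ∈ F) {z : α} (hz : ∀ i, z ∉ c i)
    {A : Finset α} (hA : A ∈ F) (h₀ : c 0 ⊂ A.erase z) (h₁ : A.erase z ⊂ c 1) : False := by
  rw [← erase_eq_of_notMem (hz 0)] at h₀
  rw [← erase_eq_of_notMem (hz 1)] at h₁
  exact (hF z).false_of_ssubset_of_ssubset (t := fun i => (c i.succ).erase z) h₀ h₁
    ((hc.comp Fin.strictMono_succ).finset_erase (.inr fun i => hz _))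
    (mem_image_of_mem _ (hcF 0)) (mem_image_of_mem _ hA) fun i => mem_image_of_mem _ (hcF _)

lemma false_of_chain_above (hF : ∀ y, IsKSperner (j + 2) (F.image (·.erase y)))
    {B₀ B₁ : Finset α} (hB : B₀ ⊂ B₁) (hB₀ : B₀ ∈ F) (hB₁ : B₁ ∈ F) (hgap : #B₀ + 2 ≤ #B₁)
    {y z : α} (hy₁ : y ∈ B₁) (hy₀ : y ∉ B₀) (hz : z ∉ B₁) {A : Fin (j + 1) → Finset α}
    (hA : StrictMono A) (hAF : ∀ i, A i ∈ F) (hzA : insert z B₁ ⊆ A 0) : False := by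
  have hA₀ : ∀ i, insert z B₁ ⊆ A i := fun i => hzA.trans (hA.monotone (Fin.zero_le i))
  have hB₀y : B₀.erase y = B₀ := erase_eq_of_notMem hy₀
  refine (hF y).false_of_ssubset_of_ssubset (p := B₀.erase y)
    (t := fun i => (A i).erase y) ?_ ?_
    (hA.finset_erase (.inl fun i => hA₀ i (mem_insert_of_mem hy₁)))
    (mem_image_of_mem _ hB₀) (mem_image_of_mem _ hB₁) fun i => mem_image_of_mem _ (hAF i)
  · rw [hB₀y]
    exact ssubset_erase_of_card_add_two_le hB.subset hy₀ hgap
  · exact erase_ssubset_erase_of_ssubset ((ssubset_insert hz).trans_subset hzA) (.inl hy₁)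

lemma card_lt_of_mem_chain (hF : ∀ y, IsKSperner (j + 2) (F.image (·.erase y)))
    (hc : StrictMono c) (hcF : ∀ i, c i ∈ F) (hgap : #(c 0) + 2 ≤ #(c 1))
    {x y z w : α} (hx : x ∈ c 0) (hy₁ : y ∈ c 1) (hy₀ : y ∉ c 0) (hz : ∀ i, z ∉ c i)
    (hw : w ∈ c 1) {C : Set (Finset α)} (hC : IsChain (· ⊆ ·) C)
    (hG : insert y ((c 0).erase x) ∈ C) (hP : insert y (c 0) ∈ C)
    (hH : insert z ((c 1).erase w) ∈ C) {A : Finset α} (hAF : A ∈ F) (hAC : A ∈ C) :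
    #(c 1) < #A := by
  by_contra! hA
  have hc₀ : 0 < #(c 0) := card_pos.2 ⟨x, hx⟩
  by_cases hA₀ : #A ≤ #(c 0)
  · have hAG : A ⊆ insert y ((c 0).erase x) := hC.subset_of_card_le hAC hG <| by
      rw [card_insert_of_notMem fun h => hy₀ (mem_of_mem_erase h), card_erase_of_mem hx]
      omega
    refine false_of_erase_ssubset_bottom hF hc hcF hgap hy₁ hy₀ hAF ?_
    calc A.erase y ⊆ (insert y ((c 0).erase x)).erase y := erase_subset_erase y hAG
      _ ⊆ (c 0).erase x := erase_insert_subset y _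
      _ ⊂ c 0 := erase_ssubset hx
  · have hzy : z ∉ insert y (c 0) := by
      rw [mem_insert, not_or]
      exact ⟨by rintro rfl; exact hz 1 hy₁, hz 0⟩
    have hzw : z ∉ (c 1).erase w := fun h => hz 1 (mem_of_mem_erase h)
    have hPA : insert y (c 0) ⊆ A :=
      hC.subset_of_card_le hP hAC (by rw [card_insert_of_notMem hy₀]; omega)
    have hAH : A ⊆ insert z ((c 1).erase w) := hC.subset_of_card_le hAC hH <| by
      rw [card_insert_of_notMem hzw, card_erase_of_mem hw]
      omega
    refine false_of_erase_between hF hc hcF hz hAF ?_ ?_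
    · calc c 0 ⊂ insert y (c 0) := ssubset_insert hy₀
        _ = (insert y (c 0)).erase z := (erase_eq_of_notMem hzy).symm
        _ ⊆ A.erase z := erase_subset_erase z hPA
    · calc A.erase z ⊆ (insert z ((c 1).erase w)).erase z := erase_subset_erase z hAH
        _ = (c 1).erase w := erase_insert hzw
        _ ⊂ c 1 := erase_ssubset hw

end TraceSperner

theorem stmt9 (n k m : ℕ) (hk : 2 ≤ k) (hm : 2 ≤ m)
    (F : Finset (Finset (Fin n)))
    (hF : ∀ y : Fin n, IsKSperner k (F.image (fun A => A.erase y)))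
    (c : Fin k → Finset (Fin n)) (hmem : ∀ i, c i ∈ F)
    (hchain : ∀ i j : Fin k, i < j → c i ⊂ c j)
    (hgap : m = ((c ⟨1, by omega⟩) \ (c ⟨0, by omega⟩)).card)
    (x z : Fin n) (hx : x ∈ c ⟨0, by omega⟩) (hz : z ∉ c ⟨k - 1, by omega⟩)
    (σ : Fin m → Fin n)
    (hσmem : ∀ j : Fin m, σ j ∈ (c ⟨1, by omega⟩) \ (c ⟨0, by omega⟩))
    (C : Finset (Finset (Fin n))) (hC : C ∈ maxChains n)
    (h1 : insert (σ ⟨0, by omega⟩) ((c ⟨0, by omega⟩).erase x) ∈ C)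
    (h2 : ∀ j : Fin m, (j : ℕ) < m - 1 →
      (c ⟨0, by omega⟩) ∪ (Finset.univ.filter (fun t : Fin m => t ≤ j)).image σ ∈ C)
    (h3 : insert z ((c ⟨1, by omega⟩).erase (σ ⟨m - 1, by omega⟩)) ∈ C)
    (h4 : ∀ j : Fin k, 0 < (j : ℕ) → insert z (c j) ∈ C) :
    (F ∩ C).card ≤ k - 2 := by
  obtain ⟨j, rfl⟩ : ∃ j, k = j + 2 := ⟨k - 2, by omega⟩
  simp only [Fin.zero_eta, Fin.mk_one] at hgap hx hσmem h1 h2 h3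
  have hc : StrictMono c := fun a b h => hchain a b h
  have hzc : ∀ i, z ∉ c i := fun i hzi => hz (hc.monotone (Fin.le_last i) hzi)
  have hc₁₀ : #(c 0) + 2 ≤ #(c 1) := by
    have := card_sdiff_of_subset (hc.monotone (Fin.zero_le 1))
    have := card_le_card (hc.monotone (Fin.zero_le 1))
    omega
  obtain ⟨hy₁, hy₀⟩ := mem_sdiff.1 (hσmem ⟨0, by omega⟩)
  have hP : insert (σ ⟨0, by omega⟩) (c 0) ∈ C := by
    have hle : (univ.filter fun t : Fin m => t ≤ ⟨0, by omega⟩) = {⟨0, by omega⟩} := by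
      ext t
      simp [Fin.le_def, Fin.ext_iff]
    simpa [hle, union_comm, ← insert_eq] using h2 ⟨0, by omega⟩ (by simp only; omega)
  have hCchain : IsChain (· ⊆ ·) (C : Set (Finset (Fin n))) :=
    fun A hA B hB _ => (mem_filter.1 hC).2.2 A hA B hB
  have hbig : ∀ A ∈ F ∩ C, #(c 1) < #A := fun A hA =>
    card_lt_of_mem_chain hF hc hmem hc₁₀ hx hy₁ hy₀ hzc (mem_sdiff.1 (hσmem _)).1 hCchain
      h1 hP h3 (mem_inter.1 hA).1 (mem_inter.1 hA).2
  by_contra! hcard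
  obtain ⟨A, hA, hAFC⟩ := (hCchain.mono (inter_subset_right (s₁ := F))).exists_strictMono_fin
    (r := j + 1) (by omega)
  have hQA : insert z (c 1) ⊆ A 0 :=
    hCchain.subset_of_card_le (h4 1 Nat.one_pos) (mem_inter.1 (hAFC 0)).2
      (by rw [card_insert_of_notMem (hzc 1)]; exact hbig _ (hAFC 0))
  exact false_of_chain_above hF (hc Fin.zero_lt_one) (hmem 0) (hmem 1) hc₁₀ hy₁ hy₀ (hzc 1) hA
    (fun i => (mem_inter.1 (hAFC i)).1) hQA
end

section
/- Let k ≥ 2 and F ⊆ 2^[n] a family such that every maximal chain C of 2^[n] satisfies |F ∩ C| ≤ k, and moreover the number of maximal chains with |F ∩ C| ≤ k − 2 is at least the number of maximal chains with |F ∩ C| = k. Then ∑_{F ∈ F} 1/C(n, |F|) ≤ k − 1, where C(n, m) denotes the binomial coefficient. -/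
/-!
Double counting over maximal chains. A maximal chain corresponds to a permutation `σ` of `[n]`
(its members are the initial segments `σ⁻¹ {0, …, i - 1}`), so there are `n!` of them and
`|A|! (n - |A|)!` pass through a given `A`. Hence `∑_{A ∈ F} n! / C(n, |A|) = ∑_C |F ∩ C|`.
Each chain meets `F` in at most `k` sets, and every chain meeting `F` in exactly `k` sets is
compensated by one meeting it in at most `k - 2`, so the average of `|F ∩ C|` is at most `k - 1`.
-/

open Finset
open scoped Nat

namespace Equiv.Perm

variable {α : Type*} (p q : α → Prop) [DecidablePred p] [DecidablePred q]

def subtypeIffEquivProd :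
    {σ : Perm α // ∀ x, p x ↔ q (σ x)} ≃
      ({x // p x} ≃ {x // q x}) × ({x // ¬p x} ≃ {x // ¬q x}) where
  toFun σ := (σ.1.subtypeEquiv σ.2, σ.1.subtypeEquiv fun x => not_congr (σ.2 x))
  invFun e := ⟨Equiv.subtypeCongr e.1 e.2, fun x => by
    by_cases hx : p x
    · simp [Equiv.subtypeCongr, sumCompl_symm_apply_of_pos hx, hx, (e.1 ⟨x, hx⟩).2]
    · simp [Equiv.subtypeCongr, sumCompl_symm_apply_of_neg hx, hx, (e.2 ⟨x, hx⟩).2]⟩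
  left_inv σ := by
    ext x
    by_cases hx : p x
    · simp [Equiv.subtypeCongr, sumCompl_symm_apply_of_pos hx]
    · simp [Equiv.subtypeCongr, sumCompl_symm_apply_of_neg hx]
  right_inv e := by
    ext ⟨x, hx⟩ <;>
      simp [Equiv.subtypeCongr, sumCompl_symm_apply_of_pos, sumCompl_symm_apply_of_neg, hx]

theorem card_filter_forall_iff [Fintype α] [DecidableEq α]
    (h : #{x | p x} = #{x | q x}) :
    #{σ : Perm α | ∀ x, p x ↔ q (σ x)} = (#{x | p x})! * (#{x | ¬p x})! := by
  have hc : #{x | ¬p x} = #{x | ¬q x} := by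
    rw [filter_not, filter_not, card_sdiff_of_subset (filter_subset _ _),
      card_sdiff_of_subset (filter_subset _ _), h]
  simp only [← Fintype.card_subtype] at h hc ⊢
  rw [Fintype.card_congr (subtypeIffEquivProd p q), Fintype.card_prod,
    Fintype.card_equiv (Fintype.equivOfCardEq h), Fintype.card_equiv (Fintype.equivOfCardEq hc)]

end Equiv.Perm

namespace Finset

theorem sum_card_inter_eq_sum_card_filter_mem {α : Type*} [DecidableEq α] (s : Finset α)
    (B : Finset (Finset α)) : ∑ t ∈ B, #(s ∩ t) = ∑ a ∈ s, #{t ∈ B | a ∈ t} := by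
  simp_rw [← filter_mem_eq_inter, card_eq_sum_ones, sum_filter]
  exact sum_comm

theorem sum_le_pred_mul_card {ι : Type*} (s : Finset ι) (f : ι → ℕ) {k : ℕ} (hk : 2 ≤ k)
    (hf : ∀ i ∈ s, f i ≤ k) (h : #{i ∈ s | f i = k} ≤ #{i ∈ s | f i ≤ k - 2}) :
    ∑ i ∈ s, f i ≤ (k - 1) * #s := by
  have pointwise : ∀ i ∈ s, (f i : ℤ) + (if f i ≤ k - 2 then 1 else 0) ≤
      (k - 1 : ℤ) + (if f i = k then 1 else 0) := by
    intro i hi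
    have := hf i hi
    split_ifs <;> omega
  have := sum_le_sum pointwise
  rw [sum_add_distrib, sum_add_distrib, sum_boole, sum_boole, sum_const] at this
  have h' : (#{i ∈ s | f i = k} : ℤ) ≤ #{i ∈ s | f i ≤ k - 2} := by exact_mod_cast h
  zify [hk.trans' one_le_two]
  rw [nsmul_eq_mul] at this
  linarith

end Finset

section PermChain

variable {n : ℕ}

def permPrefix (σ : Equiv.Perm (Fin n)) (i : ℕ) : Finset (Fin n) :=
  {x | (σ x : ℕ) < i}

/-- The chain of the `permPrefix σ i`, `i ≤ n`, described as the sets that `σ` maps onto an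
initial segment of `Fin n`. -/
def permChain (σ : Equiv.Perm (Fin n)) : Finset (Finset (Fin n)) :=
  {A | ∀ x, x ∈ A ↔ (σ x : ℕ) < #A}

theorem mem_permChain {σ : Equiv.Perm (Fin n)} {A : Finset (Fin n)} :
    A ∈ permChain σ ↔ ∀ x, x ∈ A ↔ (σ x : ℕ) < #A := by
  simp [permChain]

theorem mem_permPrefix {σ : Equiv.Perm (Fin n)} {i : ℕ} {x : Fin n} :
    x ∈ permPrefix σ i ↔ (σ x : ℕ) < i := by
  simp [permPrefix]

theorem card_permPrefix (σ : Equiv.Perm (Fin n)) {i : ℕ} (hi : i ≤ n) :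
    #(permPrefix σ i) = i := by
  rw [card_equiv σ (t := {y : Fin n | (y : ℕ) < i}) (by simp [permPrefix]),
    Fin.card_filter_val_lt, min_eq_right hi]

theorem permPrefix_mem_permChain (σ : Equiv.Perm (Fin n)) {i : ℕ} (hi : i ≤ n) :
    permPrefix σ i ∈ permChain σ := by
  simp [mem_permChain, mem_permPrefix, card_permPrefix σ hi]

theorem card_permChain (σ : Equiv.Perm (Fin n)) : #(permChain σ) = n + 1 := by
  rw [← card_range (n + 1)]
  refine card_nbij' card (permPrefix σ) (fun A _ => ?_) (fun i hi => ?_)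
    (fun A hA => ?_) (fun i hi => ?_)
  · simpa [Nat.lt_succ_iff] using card_le_univ A
  · exact permPrefix_mem_permChain σ (by simpa [Nat.lt_succ_iff] using hi)
  · ext x; simp [mem_permPrefix, (mem_permChain.mp hA) x]
  · exact card_permPrefix σ (by simpa [Nat.lt_succ_iff] using hi)

theorem permChain_mem_maxChains (σ : Equiv.Perm (Fin n)) : permChain σ ∈ maxChains n := by
  refine mem_filter.mpr ⟨mem_powerset.mpr (subset_univ _), card_permChain σ, ?_⟩
  intro A hA B hB
  rcases le_total #A #B with h | h
  · exact .inl fun x hx => (mem_permChain.mp hB x).mpr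
      (((mem_permChain.mp hA x).mp hx).trans_le h)
  · exact .inr fun x hx => (mem_permChain.mp hA x).mpr
      (((mem_permChain.mp hB x).mp hx).trans_le h)

theorem permChain_injective : Function.Injective (permChain (n := n)) := by
  intro σ τ h
  ext x
  refine congrArg Fin.val (eq_of_forall_gt_iff fun i => ?_)
  have hmem : permPrefix σ i ∈ permChain τ := h ▸ permPrefix_mem_permChain σ i.is_lt.le
  have := mem_permChain.mp hmem x
  rwa [mem_permPrefix, card_permPrefix σ i.is_lt.le] at this

end PermChain

section MaxChains

variable {n : ℕ} {C : Finset (Finset (Fin n))}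

theorem mem_maxChains :
    C ∈ maxChains n ↔ #C = n + 1 ∧ ∀ A ∈ C, ∀ B ∈ C, A ⊆ B ∨ B ⊆ A := by
  simp [maxChains]

theorem injOn_card_of_mem_maxChains (hC : C ∈ maxChains n) :
    Set.InjOn card (C : Set (Finset (Fin n))) := by
  intro A hA B hB hAB
  rcases (mem_maxChains.mp hC).2 A hA B hB with h | h
  · exact eq_of_subset_of_card_le h hAB.ge
  · exact (eq_of_subset_of_card_le h hAB.le).symm

theorem image_card_of_mem_maxChains (hC : C ∈ maxChains n) : C.image card = range (n + 1) := by
  refine eq_of_subset_of_card_le (fun i hi => ?_) ?_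
  · obtain ⟨A, -, rfl⟩ := mem_image.mp hi
    simpa [Nat.lt_succ_iff] using card_le_univ A
  · rw [card_image_of_injOn (injOn_card_of_mem_maxChains hC), (mem_maxChains.mp hC).1,
      card_range]

theorem exists_mem_card_eq_of_mem_maxChains (hC : C ∈ maxChains n) {i : ℕ} (hi : i ≤ n) :
    ∃ B ∈ C, #B = i :=
  mem_image.mp ((image_card_of_mem_maxChains hC).symm ▸ mem_range.mpr (Nat.lt_succ_of_le hi))

theorem card_filter_card_lt_of_mem_maxChains (hC : C ∈ maxChains n) {i : ℕ} (hi : i ≤ n + 1) :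
    #{B ∈ C | #B < i} = i := by
  suffices h : ({B ∈ C | #B < i} : Finset _).image card = range i by
    rw [← card_image_of_injOn ((injOn_card_of_mem_maxChains hC).mono
      (coe_subset.mpr (filter_subset _ _))), h, card_range]
  ext j
  simp only [mem_image, mem_filter, mem_range]
  constructor
  · rintro ⟨B, ⟨-, hB⟩, rfl⟩
    exact hB
  · intro hj
    obtain ⟨B, hB, rfl⟩ := exists_mem_card_eq_of_mem_maxChains hC (by omega : j ≤ n)
    exact ⟨B, ⟨hB, hj⟩, rfl⟩

theorem mem_iff_card_filter_notMem_le (hC : C ∈ maxChains n) {B : Finset (Fin n)} (hB : B ∈ C)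
    (x : Fin n) : x ∈ B ↔ #{B' ∈ C | x ∉ B'} ≤ #B := by
  have hchain := (mem_maxChains.mp hC).2
  have hBn : #B ≤ n := by simpa using card_le_univ B
  constructor
  · intro hx
    calc #{B' ∈ C | x ∉ B'} ≤ #{B' ∈ C | #B' < #B} := by
          refine card_le_card fun B' hB' => ?_
          obtain ⟨hB'C, hxB'⟩ := mem_filter.mp hB'
          refine mem_filter.mpr ⟨hB'C, card_lt_card ?_⟩
          rcases hchain B' hB'C B hB with h | h
          · exact ssubset_of_subset_of_ne h (by rintro rfl; exact hxB' hx)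
          · exact absurd (h hx) hxB'
      _ = #B := card_filter_card_lt_of_mem_maxChains hC (by omega)
  · intro h
    by_contra hx
    have : #{B' ∈ C | #B' < #B + 1} ≤ #{B' ∈ C | x ∉ B'} := by
      refine card_le_card fun B' hB' => ?_
      obtain ⟨hB'C, hB'B⟩ := mem_filter.mp hB'
      refine mem_filter.mpr ⟨hB'C, fun hxB' => hx ?_⟩
      rcases hchain B' hB'C B hB with h | h
      · exact h hxB'
      · exact eq_of_subset_of_card_le h (by omega) ▸ hxB'
    rw [card_filter_card_lt_of_mem_maxChains hC (by omega)] at this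
    omega

theorem exists_permChain_eq (hC : C ∈ maxChains n) : ∃ σ, permChain σ = C := by
  -- `x` enters the chain at its member of size `rank x`
  set rank : Fin n → ℕ := fun x => #{B ∈ C | x ∉ B}
  have hmem : ∀ B ∈ C, ∀ x, x ∈ B ↔ rank x ≤ #B := fun B hB x =>
    mem_iff_card_filter_notMem_le hC hB x
  have rank_pos : ∀ x, 1 ≤ rank x := by
    intro x
    obtain ⟨B, hB, hB0⟩ := exists_mem_card_eq_of_mem_maxChains hC (Nat.zero_le n)
    have := (hmem B hB x).not.mp (by simp [card_eq_zero.mp hB0])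
    omega
  have rank_le : ∀ x, rank x ≤ n := by
    intro x
    obtain ⟨B, hB, hBn⟩ := exists_mem_card_eq_of_mem_maxChains hC le_rfl
    exact hBn ▸ (hmem B hB x).mp (by simp [eq_univ_of_card B (by simpa using hBn)])
  set f : Fin n → Fin n := fun x =>
    ⟨rank x - 1, by have := rank_le x; have := rank_pos x; omega⟩
  have hf : ∀ B ∈ C, ∀ x, x ∈ B ↔ (f x : ℕ) < #B := by
    intro B hB x
    have := rank_pos x
    rw [hmem B hB x]
    simp only [f]
    omega
  have f_surj : Function.Surjective f := by
    intro m
    obtain ⟨B, hB, hBm⟩ := exists_mem_card_eq_of_mem_maxChains hC (m.is_lt : ↑m + 1 ≤ n)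
    obtain ⟨B', hB', hB'm⟩ := exists_mem_card_eq_of_mem_maxChains hC m.is_lt.le
    obtain ⟨x, hxB, hxB'⟩ := not_subset.mp fun h : B ⊆ B' => by
      have := card_le_card h
      omega
    refine ⟨x, Fin.ext ?_⟩
    have h1 := (hf B hB x).mp hxB
    have h2 := (hf B' hB' x).not.mp hxB'
    omega
  refine ⟨Equiv.ofBijective f f_surj.bijective_of_finite, ?_⟩
  refine (eq_of_subset_of_card_le (fun B hB => mem_permChain.mpr (hf B hB)) ?_).symm
  rw [card_permChain, (mem_maxChains.mp hC).1]

end MaxChains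

theorem maxChains_eq_image_permChain (n : ℕ) : maxChains n = univ.image permChain := by
  ext C
  simp only [mem_image, mem_univ, true_and]
  exact ⟨exists_permChain_eq, fun ⟨σ, hσ⟩ => hσ ▸ permChain_mem_maxChains σ⟩

theorem card_maxChains (n : ℕ) : #(maxChains n) = n ! := by
  rw [maxChains_eq_image_permChain, card_image_of_injective _ permChain_injective, card_univ,
    Fintype.card_perm, Fintype.card_fin]

theorem card_filter_mem_maxChains {n : ℕ} (A : Finset (Fin n)) :
    #{C ∈ maxChains n | A ∈ C} = (#A)! * (n - #A)! := by
  have hA : #{x | x ∈ A} = #{y : Fin n | (y : ℕ) < #A} := by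
    rw [filter_univ_mem, Fin.card_filter_val_lt, min_eq_right (by simpa using card_le_univ A)]
  rw [maxChains_eq_image_permChain, filter_image, card_image_of_injective _ permChain_injective]
  convert Equiv.Perm.card_filter_forall_iff (· ∈ A) (fun y : Fin n => (y : ℕ) < #A) hA using 2
  · ext σ
    simp [mem_permChain]
  · simp
  · rw [filter_not, filter_univ_mem, card_univ_sdiff, Fintype.card_fin]

theorem stmt11 (n k : ℕ) (hk : 2 ≤ k) (F : Finset (Finset (Fin n)))
    (h1 : ∀ C ∈ maxChains n, (F ∩ C).card ≤ k)
    (h2 : ((maxChains n).filter (fun C => (F ∩ C).card = k)).card ≤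
      ((maxChains n).filter (fun C => (F ∩ C).card ≤ k - 2)).card) :
    ∑ A ∈ F, (1 : ℚ) / (n.choose A.card) ≤ (k : ℚ) - 1 := by
  have hchains : ∑ A ∈ F, (#A)! * (n - #A)! ≤ (k - 1) * n ! := by
    rw [← card_maxChains n]
    simp_rw [← card_filter_mem_maxChains, ← sum_card_inter_eq_sum_card_filter_mem]
    exact sum_le_pred_mul_card _ _ hk h1 h2
  have hterm : ∀ A ∈ F, (1 : ℚ) / n.choose #A = ((#A)! * (n - #A)! : ℕ) / n ! := by
    intro A _
    rw [Nat.cast_choose ℚ (by simpa using card_le_univ A)]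
    push_cast
    field_simp
  calc ∑ A ∈ F, (1 : ℚ) / n.choose #A
        = ((∑ A ∈ F, (#A)! * (n - #A)! : ℕ) : ℚ) / n ! := by
        rw [sum_congr rfl hterm, ← sum_div, Nat.cast_sum]
    _ ≤ ((k - 1) * n ! : ℕ) / n ! := by gcongr
    _ = k - 1 := by
        rw [Nat.cast_mul, Nat.cast_sub (by omega), mul_div_cancel_right₀ _ (by positivity)]
        simp
end

section
/- Let k ≥ 2 and let F ⊆ 2^[n] be an (n−1)-trace k-Sperner family such that 4 ≤ |F| ≤ n − 1 for every F ∈ F. Let c⁻, c, c⁺ denote the numbers of maximal chains C of 2^[n] with |F ∩ C| < k − 1, = k − 1, and = k respectively. Then c⁻ ≥ c⁺. -/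
/-! Encode a maximal chain by its level function `g`, where `g j` is its member of size `j`.
For a chain meeting `F` in exactly `k` levels, with first hit `i` and last hit `m`, let `a` be the
element entering at level `i` and `y` the one entering at level `m + 1`. Moving `a` to the top of
the chain, and, when every later hit stays in `F` after removing `a`, also moving `y` to the
bottom, produces a maximal chain with at most `k - 2` hits.

Everything rests on one observation: removing a fixed point `x` from the members of a chain
containing `x` gives a chain again, so at most `k` of them lie in the `x`-trace of `F`. A new hit of
the modified chain, or two chains with the same image, would produce `k + 1` of them. -/

open Finset

theorem IsKSperner.card_le_of_strictMonoOn {α : Type*} {k : ℕ} {G : Finset (Finset α)}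
    (hG : IsKSperner k G) {f : ℕ → Finset α} {S : Set ℕ} (hf : StrictMonoOn f S) {T : Finset ℕ}
    (hT : ∀ j ∈ T, j ∈ S ∧ f j ∈ G) : #T ≤ k := by
  by_contra! h
  obtain ⟨U, hUT, hU⟩ := exists_subset_card_eq (show k + 1 ≤ #T by omega)
  have hmem := fun t => hT _ (hUT (U.orderEmbOfFin_mem hU t))
  exact hG ⟨fun t => f (U.orderEmbOfFin hU t),
    fun s t hst => hf (hmem s).1 (hmem t).1 ((U.orderEmbOfFin hU).strictMono hst),
    fun t => (hmem t).2⟩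

namespace TraceSperner

variable {α : Type*}

section eraseTrace

variable [DecidableEq α] {F : Finset (Finset α)}

def eraseTrace (F : Finset (Finset α)) (x : α) : Finset (Finset α) :=
  F.image (fun A => A.erase x)

lemma erase_mem_eraseTrace {A : Finset α} (hA : A ∈ F) (x : α) : A.erase x ∈ eraseTrace F x :=
  mem_image_of_mem _ hA

lemma mem_eraseTrace_of_notMem {A : Finset α} {x : α} (hA : A ∈ F) (hx : x ∉ A) :
    A ∈ eraseTrace F x := by
  simpa [erase_eq_of_notMem hx] using erase_mem_eraseTrace hA x

end eraseTrace

structure IsGradedChain (N : ℕ) (g : ℕ → Finset α) : Prop where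
  card_eq : ∀ j ≤ N, #(g j) = j
  monotoneOn : MonotoneOn g (Set.Iic N)

def EntersAt (N : ℕ) (g : ℕ → Finset α) (x : α) (p : ℕ) : Prop :=
  ∀ j ≤ N, x ∈ g j ↔ p ≤ j

lemma EntersAt.congr {N p : ℕ} {g g' : ℕ → Finset α} {x : α} (hx : EntersAt N g x p)
    (h : Set.EqOn g g' (Set.Iic N)) : EntersAt N g' x p :=
  fun j hj => by rw [← h (Set.mem_Iic.2 hj)]; exact hx j hj

lemma EntersAt.mem {N p : ℕ} {g : ℕ → Finset α} {x : α} (hx : EntersAt N g x p) {j : ℕ}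
    (hpj : p ≤ j) (hjN : j ≤ N) : x ∈ g j :=
  (hx j hjN).2 hpj

lemma EntersAt.notMem {N p : ℕ} {g : ℕ → Finset α} {x : α} (hx : EntersAt N g x p) {j : ℕ}
    (hjp : j < p) (hjN : j ≤ N) : x ∉ g j :=
  fun h => absurd ((hx j hjN).1 h) (by omega)

namespace IsGradedChain

variable {N : ℕ} {g : ℕ → Finset α}

lemma mono (hg : IsGradedChain N g) {j l : ℕ} (hjl : j ≤ l) (hl : l ≤ N) : g j ⊆ g l :=
  hg.monotoneOn (Set.mem_Iic.2 (hjl.trans hl)) (Set.mem_Iic.2 hl) hjl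

lemma strictMonoOn (hg : IsGradedChain N g) : StrictMonoOn g (Set.Iic N) := by
  intro j hj l hl hjl
  refine Finset.ssubset_iff_subset_ne.2 ⟨hg.mono hjl.le hl, fun h => ?_⟩
  have := hg.card_eq j (hjl.le.trans hl)
  rw [h, hg.card_eq l hl] at this
  omega

lemma strictMonoOn_sub_one (hg : IsGradedChain N g) :
    StrictMonoOn (fun l => g (l - 1)) (Set.Icc 1 (N + 1)) :=
  hg.strictMonoOn.comp (fun _ hj _ hl h => by simp only [Set.mem_Icc] at hj hl; omega)
    (fun _ hj => by simp only [Set.mem_Icc, Set.mem_Iic] at hj ⊢; omega)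

variable [DecidableEq α]

lemma strictMonoOn_erase (hg : IsGradedChain N g) {x : α} {p : ℕ}
    (hx : ∀ j, p ≤ j → j ≤ N → x ∈ g j) :
    StrictMonoOn (fun l => (g l).erase x) (Set.Icc p N) := by
  intro j hj l hl hjl
  have hsub := hg.strictMonoOn (Set.mem_Iic.2 hj.2) (Set.mem_Iic.2 hl.2) hjl
  refine Finset.ssubset_iff_subset_ne.2 ⟨erase_subset_erase x hsub.1, fun h => hsub.ne ?_⟩
  simp only at h
  rw [← insert_erase (hx j hj.1 hj.2), h, insert_erase (hx l hl.1 hl.2)]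

lemma insert_eq_of_entersAt (hg : IsGradedChain N g) {x : α} {p : ℕ} (hx : EntersAt N g x p)
    (hp : 1 ≤ p) (hpN : p ≤ N) : insert x (g (p - 1)) = g p := by
  have hnot : x ∉ g (p - 1) := hx.notMem (by omega) (by omega)
  refine eq_of_subset_of_card_le (insert_subset (hx.mem le_rfl hpN) (hg.mono (by omega) hpN)) ?_
  rw [card_insert_of_notMem hnot, hg.card_eq p hpN, hg.card_eq (p - 1) (by omega)]
  omega

lemma erase_eq_of_entersAt (hg : IsGradedChain N g) {x : α} {p : ℕ} (hx : EntersAt N g x p)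
    (hp : 1 ≤ p) (hpN : p ≤ N) : (g p).erase x = g (p - 1) := by
  rw [← hg.insert_eq_of_entersAt hx hp hpN, erase_insert]
  exact hx.notMem (by omega) (by omega)

lemma sdiff_eq_of_entersAt (hg : IsGradedChain N g) {x : α} {p : ℕ} (hx : EntersAt N g x p)
    (hp : 1 ≤ p) (hpN : p ≤ N) : g p \ g (p - 1) = {x} := by
  rw [← hg.insert_eq_of_entersAt hx hp hpN, insert_sdiff_of_notMem _
    (hx.notMem (by omega) (by omega)), sdiff_self, bot_eq_empty, insert_empty]

lemma exists_entersAt (hg : IsGradedChain N g) {p : ℕ} (hp : 1 ≤ p) (hpN : p ≤ N) :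
    ∃ x, EntersAt N g x p := by
  have hsub := hg.mono (show p - 1 ≤ p by omega) hpN
  obtain ⟨x, hx⟩ : ∃ x, g p \ g (p - 1) = {x} := card_eq_one.1 (by
    rw [card_sdiff_of_subset hsub, hg.card_eq _ hpN, hg.card_eq _ (by omega)]; omega)
  have hxp := mem_sdiff.1 (hx ▸ mem_singleton_self x)
  refine ⟨x, fun j hj => ⟨fun h => ?_, fun h => hg.mono h hj hxp.1⟩⟩
  by_contra hlt
  exact hxp.2 (hg.mono (by omega) (by omega) h)

lemma entersAt_unique (hg : IsGradedChain N g) {x y : α} {p : ℕ} (hx : EntersAt N g x p)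
    (hy : EntersAt N g y p) (hp : 1 ≤ p) (hpN : p ≤ N) : x = y :=
  singleton_inj.1 ((hg.sdiff_eq_of_entersAt hx hp hpN).symm.trans
    (hg.sdiff_eq_of_entersAt hy hp hpN))

end IsGradedChain

variable [DecidableEq α]

/-- Reading `g` as the order in which the elements enter the chain, `moveUp g {a} i p` moves the
element `a` entering at level `i` up to level `p`, and `moveDown g {y} q p` moves the element `y`
entering at level `p` down to level `q`. -/
def moveUp (g : ℕ → Finset α) (A : Finset α) (i p j : ℕ) : Finset α :=
  if i ≤ j ∧ j < p then g (j + 1) \ A else g j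

def moveDown (g : ℕ → Finset α) (A : Finset α) (q p j : ℕ) : Finset α :=
  if q ≤ j ∧ j < p then A ∪ g (j - 1) else g j

section moveUp

variable {N i p : ℕ} {g : ℕ → Finset α} {a : α}

lemma moveUp_eq_self {A : Finset α} {j : ℕ} (h : ¬(i ≤ j ∧ j < p)) : moveUp g A i p j = g j :=
  if_neg h

lemma moveUp_eq_moveUp_of_lt {A : Finset α} {j p' : ℕ} (hj : j < p) (hp : p ≤ p') :
    moveUp g A i p j = moveUp g A i p' j := by
  unfold moveUp
  congr 1
  exact propext (by omega)

lemma IsGradedChain.moveUp (hg : IsGradedChain N g) (ha : EntersAt N g a i) (hp : p ≤ N) :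
    IsGradedChain N (moveUp g {a} i p) := by
  refine ⟨fun j hj => ?_, fun j hj l hl hjl => ?_⟩
  · unfold TraceSperner.moveUp
    split_ifs with h
    · rw [sdiff_singleton_eq_erase, card_erase_of_mem (ha.mem (by omega) (by omega)),
        hg.card_eq _ (by omega)]
      omega
    · exact hg.card_eq j hj
  · simp only [Set.mem_Iic] at hj hl
    unfold TraceSperner.moveUp
    simp only [sdiff_singleton_eq_erase]
    split_ifs with h₁ h₂ h₂
    · exact erase_subset_erase a (hg.mono (by omega) (by omega))
    · exact (erase_subset a _).trans (hg.mono (by omega) hl)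
    · exact subset_erase.2 ⟨hg.mono (by omega) (by omega),
        ha.notMem (by omega) hj⟩
    · exact hg.mono hjl hl

lemma entersAt_moveUp_self (ha : EntersAt N g a i) (hip : i ≤ p) :
    EntersAt N (moveUp g {a} i p) a p := by
  intro j hj
  unfold moveUp
  split_ifs with h
  · simp only [sdiff_singleton_eq_erase, notMem_erase, false_iff]
    omega
  · rw [ha j hj]
    omega

lemma entersAt_moveUp_of_lt {x : α} {q : ℕ} (hx : EntersAt N g x q) (hxa : x ≠ a) (hiq : i < q)
    (hqp : q ≤ p) (hp : p ≤ N) : EntersAt N (moveUp g {a} i p) x (q - 1) := by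
  intro j hj
  unfold moveUp
  split_ifs with h
  · rw [mem_sdiff, mem_singleton, hx _ (Nat.succ_le_of_lt (h.2.trans_le hp))]
    simp only [hxa, not_false_eq_true, and_true]
    omega
  · rw [hx j hj]
    omega

lemma moveUp_sub_one (hg : IsGradedChain N g) (ha : EntersAt N g a i) (hi : 1 ≤ i) {l : ℕ}
    (hil : i ≤ l) (hlp : l ≤ p) (hp : p ≤ N) : moveUp g {a} i p (l - 1) = (g l).erase a := by
  rcases hil.eq_or_lt with rfl | hil
  · rw [moveUp_eq_self (by omega), hg.erase_eq_of_entersAt ha hi (by omega)]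
  · rw [moveUp, if_pos (by omega), Nat.sub_add_cancel (by omega), sdiff_singleton_eq_erase]

lemma insert_moveUp_sub_one (hg : IsGradedChain N g) (ha : EntersAt N g a i) (hi : 1 ≤ i)
    {l : ℕ} (hil : i ≤ l) (hlp : l ≤ p) (hp : p ≤ N) :
    insert a (moveUp g {a} i p (l - 1)) = g l := by
  rw [moveUp_sub_one hg ha hi hil hlp hp, insert_erase (ha.mem hil (by omega))]

lemma eqOn_of_moveUp_eqOn {g' : ℕ → Finset α} (hg : IsGradedChain N g)
    (hg' : IsGradedChain N g') (ha : EntersAt N g a i) (ha' : EntersAt N g' a i) (hi : 1 ≤ i)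
    (hp : p ≤ N) (h : Set.EqOn (moveUp g {a} i p) (moveUp g' {a} i p) (Set.Iic N)) :
    Set.EqOn g g' (Set.Iic N) := by
  intro j hj
  rw [Set.mem_Iic] at hj
  by_cases hjp : i ≤ j ∧ j < p
  · rw [← insert_moveUp_sub_one hg ha hi hjp.1 hjp.2.le hp,
      ← insert_moveUp_sub_one hg' ha' hi hjp.1 hjp.2.le hp,
      h (Set.mem_Iic.2 (by omega : j - 1 ≤ N))]
  · simpa only [moveUp_eq_self hjp] using h (Set.mem_Iic.2 hj)

end moveUp

section moveDown

variable {N q p : ℕ} {g : ℕ → Finset α} {y : α}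

lemma moveDown_eq_self {A : Finset α} {j : ℕ} (h : ¬(q ≤ j ∧ j < p)) :
    moveDown g A q p j = g j :=
  if_neg h

lemma IsGradedChain.moveDown (hg : IsGradedChain N g) (hy : EntersAt N g y p) (hq : 1 ≤ q) :
    IsGradedChain N (moveDown g {y} q p) := by
  refine ⟨fun j hj => ?_, fun j hj l hl hjl => ?_⟩
  · unfold TraceSperner.moveDown
    split_ifs with h
    · rw [singleton_union, card_insert_of_notMem (hy.notMem (by omega) (by omega)),
        hg.card_eq _ (by omega)]
      omega
    · exact hg.card_eq j hj
  · simp only [Set.mem_Iic] at hj hl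
    unfold TraceSperner.moveDown
    simp only [singleton_union]
    split_ifs with h₁ h₂ h₂
    · exact insert_subset_insert y (hg.mono (by omega) (by omega))
    · exact insert_subset (hy.mem (by omega) hl) (hg.mono (by omega) hl)
    · exact (hg.mono (by omega) (by omega)).trans (subset_insert y _)
    · exact hg.mono hjl hl

lemma entersAt_moveDown_self (hy : EntersAt N g y p) (hqp : q ≤ p) :
    EntersAt N (moveDown g {y} q p) y q := by
  intro j hj
  unfold moveDown
  split_ifs with h
  · simp only [singleton_union, mem_insert_self, true_iff]
    omega
  · rw [hy j hj]
    omega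

lemma entersAt_moveDown_of_le {x : α} {r : ℕ} (hx : EntersAt N g x r) (hxy : x ≠ y)
    (hpr : p ≤ r) : EntersAt N (moveDown g {y} q p) x r := by
  intro j hj
  unfold moveDown
  split_ifs with h
  · rw [singleton_union, mem_insert, hx _ (by omega)]
    simp only [hxy, false_or]
    omega
  · exact hx j hj

lemma erase_moveDown (hg : IsGradedChain N g) (hy : EntersAt N g y p) (hq : 1 ≤ q) {l : ℕ}
    (hql : q ≤ l) (hlp : l ≤ p) (hp : p ≤ N) : (moveDown g {y} q p l).erase y = g (l - 1) := by
  rcases hlp.eq_or_lt with rfl | hlp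
  · rw [moveDown_eq_self (by omega), hg.erase_eq_of_entersAt hy (by omega) hp]
  · rw [moveDown, if_pos ⟨hql, hlp⟩, singleton_union,
      erase_insert (hy.notMem (by omega) (by omega))]

lemma eqOn_of_moveDown_eqOn {g' : ℕ → Finset α} (hg : IsGradedChain N g)
    (hg' : IsGradedChain N g') (hy : EntersAt N g y p) (hy' : EntersAt N g' y p) (hq : 1 ≤ q)
    (hp : p ≤ N) (h : Set.EqOn (moveDown g {y} q p) (moveDown g' {y} q p) (Set.Iic N)) :
    Set.EqOn g g' (Set.Iic N) := by
  intro j hj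
  rw [Set.mem_Iic] at hj
  by_cases hjp : q ≤ j + 1 ∧ j + 1 ≤ p
  · have e := erase_moveDown hg hy hq hjp.1 hjp.2 hp
    have e' := erase_moveDown hg' hy' hq hjp.1 hjp.2 hp
    rw [Nat.add_sub_cancel] at e e'
    rw [← e, ← e', h (Set.mem_Iic.2 (by omega : j + 1 ≤ N))]
  · simpa only [moveDown_eq_self (show ¬(q ≤ j ∧ j < p) by omega)] using h (Set.mem_Iic.2 hj)

end moveDown

section hits

variable {N : ℕ} {g : ℕ → Finset α}

def hits (F : Finset (Finset α)) (N : ℕ) (g : ℕ → Finset α) : Finset ℕ :=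
  (range (N + 1)).filter (fun j => g j ∈ F)

lemma mem_hits {F : Finset (Finset α)} {j : ℕ} : j ∈ hits F N g ↔ j ≤ N ∧ g j ∈ F := by
  simp [hits]

lemma IsGradedChain.card_inter_image (hg : IsGradedChain N g) (F : Finset (Finset α)) :
    #(F ∩ (range (N + 1)).image g) = #(hits F N g) := by
  have : F ∩ (range (N + 1)).image g = (hits F N g).image g := by
    ext A
    simp only [mem_inter, mem_image, mem_range, hits, mem_filter]
    constructor
    · rintro ⟨hA, j, hj, rfl⟩
      exact ⟨j, ⟨hj, hA⟩, rfl⟩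
    · rintro ⟨j, ⟨hj, hA⟩, rfl⟩
      exact ⟨hA, j, hj, rfl⟩
  rw [this, card_image_of_injOn (hg.strictMonoOn.injOn.mono fun j hj =>
    Set.mem_Iic.2 (mem_hits.1 hj).1)]

end hits

section maxChains

/-- The member of size `j` of a chain `C`. -/
def lev (C : Finset (Finset α)) (j : ℕ) : Finset α :=
  (C.filter (fun A => #A = j)).sup id

omit [DecidableEq α] in
lemma injOn_card_of_comparable {C : Finset (Finset α)}
    (hC : ∀ A ∈ C, ∀ B ∈ C, A ⊆ B ∨ B ⊆ A) : Set.InjOn card (C : Set (Finset α)) := by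
  intro A hA B hB h
  rcases hC A hA B hB with hs | hs
  · exact eq_of_subset_of_card_le hs h.ge
  · exact (eq_of_subset_of_card_le hs h.le).symm

lemma lev_card_eq {C : Finset (Finset α)} (hC : Set.InjOn card (C : Set (Finset α)))
    {A : Finset α} (hA : A ∈ C) : lev C #A = A := by
  have : C.filter (fun B => #B = #A) = {A} := by
    ext B
    simp only [mem_filter, mem_singleton]
    exact ⟨fun h => hC h.1 hA h.2, by rintro rfl; exact ⟨hA, rfl⟩⟩
  rw [lev, this, sup_singleton, id]

lemma IsGradedChain.lev_image {N : ℕ} {g : ℕ → Finset α} (hg : IsGradedChain N g) {j : ℕ}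
    (hj : j ≤ N) : lev ((range (N + 1)).image g) j = g j := by
  have hinj : Set.InjOn card ((range (N + 1)).image g : Set (Finset α)) := by
    rintro _ hA _ hB h
    simp only [coe_image, coe_range, Set.mem_image, Set.mem_Iio] at hA hB
    obtain ⟨l, hl, rfl⟩ := hA
    obtain ⟨l', hl', rfl⟩ := hB
    rw [hg.card_eq l (by omega), hg.card_eq l' (by omega)] at h
    rw [h]
  conv_lhs => rw [← hg.card_eq j hj]
  exact lev_card_eq hinj (mem_image_of_mem g (mem_range.2 (by omega)))

variable {n : ℕ}

lemma mem_maxChains {C : Finset (Finset (Fin n))} :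
    C ∈ maxChains n ↔ #C = n + 1 ∧ ∀ A ∈ C, ∀ B ∈ C, A ⊆ B ∨ B ⊆ A := by
  simp [maxChains]

lemma IsGradedChain.image_mem_maxChains {g : ℕ → Finset (Fin n)} (hg : IsGradedChain n g) :
    (range (n + 1)).image g ∈ maxChains n := by
  refine mem_maxChains.2 ⟨?_, ?_⟩
  · rw [card_image_of_injOn (hg.strictMonoOn.injOn.mono fun j hj => by
      simp only [coe_range, Set.mem_Iio] at hj
      exact Set.mem_Iic.2 (by omega)), card_range]
  · simp only [mem_image, mem_range]
    rintro _ ⟨j, hj, rfl⟩ _ ⟨l, hl, rfl⟩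
    rcases le_total j l with h | h
    · exact Or.inl (hg.mono h (by omega))
    · exact Or.inr (hg.mono h (by omega))

lemma lev_mem {C : Finset (Finset (Fin n))} (hC : C ∈ maxChains n) {j : ℕ} (hj : j ≤ n) :
    lev C j ∈ C ∧ #(lev C j) = j := by
  obtain ⟨hcard, hcomp⟩ := mem_maxChains.1 hC
  have hinj := injOn_card_of_comparable hcomp
  have himage : C.image card = range (n + 1) := by
    refine eq_of_subset_of_card_le (fun l hl => ?_) ?_
    · obtain ⟨A, -, rfl⟩ := mem_image.1 hl
      exact mem_range.2 (Nat.lt_succ_of_le (card_le_univ A |>.trans (Fintype.card_fin n).le))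
    · rw [card_range, card_image_of_injOn hinj, hcard]
  obtain ⟨A, hA, rfl⟩ := mem_image.1 (himage ▸ mem_range.2 (Nat.lt_succ_of_le hj))
  rw [lev_card_eq hinj hA]
  exact ⟨hA, rfl⟩

lemma isGradedChain_lev {C : Finset (Finset (Fin n))} (hC : C ∈ maxChains n) :
    IsGradedChain n (lev C) := by
  refine ⟨fun j hj => (lev_mem hC hj).2, fun j hj l hl hjl => ?_⟩
  simp only [Set.mem_Iic] at hj hl
  rcases (mem_maxChains.1 hC).2 _ (lev_mem hC hj).1 _ (lev_mem hC hl).1 with h | h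
  · exact h
  · have := card_le_card h
    rw [(lev_mem hC hj).2, (lev_mem hC hl).2] at this
    rw [show j = l by omega]

lemma image_lev {C : Finset (Finset (Fin n))} (hC : C ∈ maxChains n) :
    (range (n + 1)).image (lev C) = C := by
  ext A
  simp only [mem_image, mem_range]
  refine ⟨fun ⟨j, hj, hA⟩ => hA ▸ (lev_mem hC (by omega)).1, fun hA => ⟨#A, ?_, ?_⟩⟩
  · exact Nat.lt_succ_of_le (card_le_univ A |>.trans (Fintype.card_fin n).le)
  · exact lev_card_eq (injOn_card_of_comparable (mem_maxChains.1 hC).2) hA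

end maxChains

section profile

variable {F : Finset (Finset α)} {N k : ℕ}

def firstHit (F : Finset (Finset α)) (N : ℕ) (g : ℕ → Finset α) : ℕ :=
  if h : (hits F N g).Nonempty then (hits F N g).min' h else 0

def lastHit (F : Finset (Finset α)) (N : ℕ) (g : ℕ → Finset α) : ℕ :=
  if h : (hits F N g).Nonempty then (hits F N g).max' h else 0

def reduceChain (F : Finset (Finset α)) (N : ℕ) (g : ℕ → Finset α) : ℕ → Finset α :=
  let i := firstHit F N g
  let m := lastHit F N g
  let A := g i \ g (i - 1)
  if ∀ l ∈ hits F N g, l ≠ i → g l \ A ∈ F then moveDown (moveUp g A i N) (g (m + 1) \ g m) 1 m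
  else moveUp g A i N

structure HitProfile (F : Finset (Finset α)) (N k : ℕ) (g : ℕ → Finset α) (i m : ℕ) (a y : α) :
    Prop where
  graded : IsGradedChain N g
  card_hits : #(hits F N g) = k
  first_mem : i ∈ hits F N g
  first_le : ∀ l ∈ hits F N g, i ≤ l
  last_mem : m ∈ hits F N g
  le_last : ∀ l ∈ hits F N g, l ≤ m
  two_le_first : 2 ≤ i
  first_lt_last : i < m
  last_lt : m < N
  entersAt_first : EntersAt N g a i
  entersAt_last : EntersAt N g y (m + 1)

lemma exists_hitProfile {g : ℕ → Finset α} (hg : IsGradedChain N g) (hk : 2 ≤ k)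
    (hcard : #(hits F N g) = k) (hsize : ∀ A ∈ F, 2 ≤ #A ∧ #A < N) :
    ∃ a y, HitProfile F N k g (firstHit F N g) (lastHit F N g) a y := by
  have hne : (hits F N g).Nonempty := card_pos.1 (by omega)
  have hi : firstHit F N g = (hits F N g).min' hne := dif_pos hne
  have hm : lastHit F N g = (hits F N g).max' hne := dif_pos hne
  have hsize' : ∀ l ∈ hits F N g, 2 ≤ l ∧ l < N := fun l hl => by
    obtain ⟨hlN, hlF⟩ := mem_hits.1 hl
    simpa only [hg.card_eq l hlN] using hsize _ hlF
  have hmem := hsize' _ (min'_mem _ hne)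
  have hmem' := hsize' _ (max'_mem _ hne)
  obtain ⟨a, ha⟩ := hg.exists_entersAt (p := firstHit F N g) (by omega) (by omega)
  obtain ⟨y, hy⟩ := hg.exists_entersAt (p := lastHit F N g + 1) (by omega) (by omega)
  refine ⟨a, y, hg, hcard, ?_, ?_, ?_, ?_, ?_, ?_, ?_, ha, hy⟩ <;> simp only [hi, hm]
  · exact min'_mem _ hne
  · exact fun l hl => min'_le _ l hl
  · exact max'_mem _ hne
  · exact fun l hl => le_max' _ l hl
  · exact hmem.1
  · exact min'_lt_max'_of_card _ (by omega)
  · exact hmem'.2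

/-! In the names below, `alpha` is the chain `moveUp g {a} i N` and `rho` the chain
`moveDown (moveUp g {a} i N) {y} 1 m`. -/

namespace HitProfile

variable {g : ℕ → Finset α} {i m : ℕ} {a y : α} (s : HitProfile F N k g i m a y)
include s

lemma one_le_first : 1 ≤ i := by have := s.two_le_first; omega

lemma le_of_mem {l : ℕ} (hl : l ∈ hits F N g) : i ≤ l ∧ l ≤ m := ⟨s.first_le l hl, s.le_last l hl⟩

lemma two_le_k : 2 ≤ k := by
  rw [← s.card_hits]
  exact one_lt_card.2 ⟨i, s.first_mem, m, s.last_mem, s.first_lt_last.ne⟩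

lemma y_notMem {l : ℕ} (hl : l ≤ m) : y ∉ g l :=
  s.entersAt_last.notMem (by omega) (by have := s.last_lt; omega)

lemma a_ne_y : a ≠ y := by
  rintro rfl
  have := s.first_lt_last
  exact s.y_notMem this.le (s.entersAt_first.mem le_rfl (by have := s.last_lt; omega))

lemma firstHit_eq : firstHit F N g = i := by
  rw [firstHit, dif_pos ⟨i, s.first_mem⟩]
  exact le_antisymm (min'_le _ _ s.first_mem) (le_min' _ _ _ s.first_le)

lemma lastHit_eq : lastHit F N g = m := by
  rw [lastHit, dif_pos ⟨i, s.first_mem⟩]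
  exact le_antisymm (max'_le _ _ _ s.le_last) (le_max' _ _ s.last_mem)

lemma reduceChain_of_forall (hQ : ∀ l ∈ hits F N g, l ≠ i → (g l).erase a ∈ F) :
    reduceChain F N g = moveDown (moveUp g {a} i N) {y} 1 m := by
  have hA := s.graded.sdiff_eq_of_entersAt s.entersAt_first s.one_le_first
    (by have := s.last_lt; have := s.first_lt_last; omega)
  have hY := s.graded.sdiff_eq_of_entersAt s.entersAt_last (by omega) s.last_lt
  rw [Nat.add_sub_cancel] at hY
  simp only [reduceChain, s.firstHit_eq, s.lastHit_eq, hA, hY, sdiff_singleton_eq_erase]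
  exact if_pos hQ

lemma reduceChain_of_not_forall (hQ : ¬∀ l ∈ hits F N g, l ≠ i → (g l).erase a ∈ F) :
    reduceChain F N g = moveUp g {a} i N := by
  have hA := s.graded.sdiff_eq_of_entersAt s.entersAt_first s.one_le_first
    (by have := s.last_lt; have := s.first_lt_last; omega)
  simp only [reduceChain, s.firstHit_eq, hA, sdiff_singleton_eq_erase]
  exact if_neg hQ

lemma graded_alpha : IsGradedChain N (moveUp g {a} i N) :=
  s.graded.moveUp s.entersAt_first le_rfl

lemma entersAt_alpha_a : EntersAt N (moveUp g {a} i N) a N :=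
  entersAt_moveUp_self s.entersAt_first (by have := s.last_lt; have := s.first_lt_last; omega)

lemma entersAt_alpha_y : EntersAt N (moveUp g {a} i N) y m := by
  simpa only [Nat.add_sub_cancel] using entersAt_moveUp_of_lt s.entersAt_last s.a_ne_y.symm
    (by have := s.first_lt_last; omega) s.last_lt le_rfl

lemma alpha_sub_one {l : ℕ} (hil : i ≤ l) (hlN : l ≤ N) :
    moveUp g {a} i N (l - 1) = (g l).erase a :=
  moveUp_sub_one s.graded s.entersAt_first s.one_le_first hil hlN le_rfl

lemma insert_alpha_sub_one {l : ℕ} (hil : i ≤ l) (hlN : l ≤ N) :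
    insert a (moveUp g {a} i N (l - 1)) = g l :=
  insert_moveUp_sub_one s.graded s.entersAt_first s.one_le_first hil hlN le_rfl

lemma graded_rho : IsGradedChain N (moveDown (moveUp g {a} i N) {y} 1 m) :=
  s.graded_alpha.moveDown s.entersAt_alpha_y le_rfl

lemma entersAt_rho_y : EntersAt N (moveDown (moveUp g {a} i N) {y} 1 m) y 1 :=
  entersAt_moveDown_self s.entersAt_alpha_y (by have := s.first_lt_last; omega)

lemma entersAt_rho_a : EntersAt N (moveDown (moveUp g {a} i N) {y} 1 m) a N :=
  entersAt_moveDown_of_le s.entersAt_alpha_a s.a_ne_y s.last_lt.le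

lemma rho_erase {l : ℕ} (hl : 1 ≤ l) (hlm : l ≤ m) :
    (moveDown (moveUp g {a} i N) {y} 1 m l).erase y = moveUp g {a} i N (l - 1) :=
  erase_moveDown s.graded_alpha s.entersAt_alpha_y le_rfl hl hlm s.last_lt.le

lemma rho_erase_eq {l : ℕ} (hil : i ≤ l) (hlm : l ≤ m) :
    (moveDown (moveUp g {a} i N) {y} 1 m l).erase y = (g l).erase a := by
  rw [s.rho_erase (by have := s.one_le_first; omega) hlm, s.alpha_sub_one hil
    (by have := s.last_lt; omega)]

lemma mem_hits_of_alpha_mem_eraseTrace (hF : IsKSperner k (eraseTrace F a)) {l : ℕ} (hl : 1 ≤ l)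
    (hlN : l ≤ N + 1) (h : moveUp g {a} i N (l - 1) ∈ eraseTrace F a) : l ∈ hits F N g := by
  by_contra hlH
  have := hF.card_le_of_strictMonoOn s.graded_alpha.strictMonoOn_sub_one
    (T := insert l (hits F N g)) (by
    intro u hu
    rcases mem_insert.1 hu with rfl | hu
    · exact ⟨⟨hl, hlN⟩, h⟩
    · obtain ⟨hiu, -⟩ := s.le_of_mem hu
      obtain ⟨huN, huF⟩ := mem_hits.1 hu
      refine ⟨⟨by have := s.one_le_first; omega, by omega⟩, ?_⟩
      rw [s.alpha_sub_one hiu huN]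
      exact erase_mem_eraseTrace huF a)
  rw [card_insert_of_notMem hlH, s.card_hits] at this
  omega

lemma mem_erase_hits_of_rho_erase_mem_eraseTrace (hF : IsKSperner k (eraseTrace F y))
    (hQ : ∀ l ∈ hits F N g, l ≠ i → (g l).erase a ∈ F) {l : ℕ} (hl : 1 ≤ l) (hlm : l ≤ m)
    (h : (moveDown (moveUp g {a} i N) {y} 1 m l).erase y ∈ eraseTrace F y) :
    l ∈ (hits F N g).erase i := by
  by_contra hlH
  have hmN := s.last_lt
  have hm : m + 1 ∉ (hits F N g).erase i :=
    fun h' => by have := s.le_last _ (mem_of_mem_erase h'); omega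
  -- shifted up by one level, `g` with `a` moved up to level `m` meets the `y`-trace at the
  -- `k - 1` hits other than `i`, at level `m + 1` (in `g m`) and at `l`
  have := hF.card_le_of_strictMonoOn (s.graded.moveUp s.entersAt_first hmN.le).strictMonoOn_sub_one
    (T := insert l (insert (m + 1) ((hits F N g).erase i))) (by
      intro u hu
      rcases mem_insert.1 hu with rfl | hu
      · refine ⟨⟨hl, by omega⟩, ?_⟩
        rwa [moveUp_eq_moveUp_of_lt (by omega) hmN.le, ← s.rho_erase hl hlm]
      rcases mem_insert.1 hu with rfl | hu
      · refine ⟨⟨by omega, by omega⟩, ?_⟩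
        rw [Nat.add_sub_cancel, moveUp_eq_self (by omega)]
        exact mem_eraseTrace_of_notMem (mem_hits.1 s.last_mem).2 (s.y_notMem le_rfl)
      · obtain ⟨hui, huH⟩ := mem_erase.1 hu
        obtain ⟨hiu, hum⟩ := s.le_of_mem huH
        refine ⟨⟨by have := s.one_le_first; omega, by omega⟩, ?_⟩
        rw [moveUp_sub_one s.graded s.entersAt_first s.one_le_first hiu hum hmN.le]
        exact mem_eraseTrace_of_notMem (hQ u huH hui)
          fun h' => s.y_notMem hum (mem_of_mem_erase h'))
  rw [card_insert_of_notMem (by simp only [mem_insert, hlH, or_false]; omega),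
    card_insert_of_notMem hm, card_erase_of_mem s.first_mem, s.card_hits] at this
  have := s.two_le_k
  omega

lemma succ_mem_hits_of_alpha_mem (hF : IsKSperner k (eraseTrace F a)) {j : ℕ} (hjN : j ≤ N)
    (h : moveUp g {a} i N j ∈ F) : i ≤ j ∧ j + 1 ∈ hits F N g := by
  by_cases hij : i ≤ j ∧ j < N
  · refine ⟨hij.1, s.mem_hits_of_alpha_mem_eraseTrace hF (by omega) (by omega) ?_⟩
    rw [Nat.add_sub_cancel]
    exact mem_eraseTrace_of_notMem h (s.entersAt_alpha_a.notMem hij.2 hjN)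
  · rw [moveUp_eq_self hij] at h
    have := s.le_of_mem (mem_hits.2 ⟨hjN, h⟩)
    have := s.last_lt
    omega

lemma card_hits_alpha (hF : IsKSperner k (eraseTrace F a))
    (hQ : ¬∀ l ∈ hits F N g, l ≠ i → (g l).erase a ∈ F) :
    #(hits F N (moveUp g {a} i N)) + 2 ≤ k := by
  push Not at hQ
  obtain ⟨l₀, hl₀, hl₀i, hl₀F⟩ := hQ
  have := card_le_card_of_injOn (fun j => j + 1) (s := hits F N (moveUp g {a} i N))
    (t := ((hits F N g).erase i).erase l₀) (fun j hj => by
    show j + 1 ∈ _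
    obtain ⟨hjN, hjF⟩ := mem_hits.1 hj
    obtain ⟨hij, hjH⟩ := s.succ_mem_hits_of_alpha_mem hF hjN hjF
    refine mem_erase.2 ⟨fun h => hl₀F ?_, mem_erase.2 ⟨by omega, hjH⟩⟩
    rwa [← h, ← s.alpha_sub_one (by omega) (mem_hits.1 hjH).1, Nat.add_sub_cancel])
    (fun _ _ _ _ h => Nat.succ_injective h)
  rw [card_erase_of_mem (mem_erase.2 ⟨hl₀i, hl₀⟩), card_erase_of_mem s.first_mem,
    s.card_hits] at this
  have := s.two_le_k
  omega

lemma card_hits_rho (hF : ∀ x, IsKSperner k (eraseTrace F x))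
    (hQ : ∀ l ∈ hits F N g, l ≠ i → (g l).erase a ∈ F) :
    #(hits F N (moveDown (moveUp g {a} i N) {y} 1 m)) + 2 ≤ k := by
  have := card_le_card (s := hits F N (moveDown (moveUp g {a} i N) {y} 1 m))
    (t := ((hits F N g).erase i).erase m) (fun j hj => by
    obtain ⟨hjN, hjF⟩ := mem_hits.1 hj
    by_cases hjm : 1 ≤ j ∧ j < m
    · exact mem_erase.2 ⟨hjm.2.ne, s.mem_erase_hits_of_rho_erase_mem_eraseTrace (hF y) hQ hjm.1
        hjm.2.le (erase_mem_eraseTrace hjF y)⟩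
    · rw [moveDown_eq_self hjm] at hjF
      obtain ⟨hij, hjH⟩ := s.succ_mem_hits_of_alpha_mem (hF a) hjN hjF
      have := s.le_of_mem hjH
      have := s.one_le_first
      omega)
  rw [card_erase_of_mem (mem_erase.2 ⟨s.first_lt_last.ne', s.last_mem⟩),
    card_erase_of_mem s.first_mem, s.card_hits] at this
  have := s.two_le_k
  omega

lemma graded_reduceChain : IsGradedChain N (reduceChain F N g) := by
  by_cases hQ : ∀ l ∈ hits F N g, l ≠ i → (g l).erase a ∈ F
  · rw [s.reduceChain_of_forall hQ]
    exact s.graded_rho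
  · rw [s.reduceChain_of_not_forall hQ]
    exact s.graded_alpha

lemma card_hits_reduceChain (hF : ∀ x, IsKSperner k (eraseTrace F x)) :
    #(hits F N (reduceChain F N g)) + 2 ≤ k := by
  by_cases hQ : ∀ l ∈ hits F N g, l ≠ i → (g l).erase a ∈ F
  · rw [s.reduceChain_of_forall hQ]
    exact s.card_hits_rho hF hQ
  · rw [s.reduceChain_of_not_forall hQ]
    exact s.card_hits_alpha (hF a) hQ

end HitProfile

namespace HitProfile

variable {g₁ g₂ : ℕ → Finset α} {i₁ i₂ m₁ m₂ : ℕ} {a a₁ a₂ y y₁ y₂ : α}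

lemma first_le_of_alpha_eq (hF : IsKSperner k (eraseTrace F a))
    (s₁ : HitProfile F N k g₁ i₁ m₁ a y₁) (s₂ : HitProfile F N k g₂ i₂ m₂ a y₂)
    (h : moveUp g₂ {a} i₂ N (i₁ - 1) = moveUp g₁ {a} i₁ N (i₁ - 1)) : i₂ ≤ i₁ := by
  have := s₁.first_lt_last
  have := s₁.last_lt
  refine s₂.first_le _ (s₂.mem_hits_of_alpha_mem_eraseTrace hF s₁.one_le_first (by omega) ?_)
  rw [h, s₁.alpha_sub_one le_rfl (by omega)]
  exact erase_mem_eraseTrace (mem_hits.1 s₁.first_mem).2 a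

lemma eqOn_of_alpha_eqOn (hF : ∀ x, IsKSperner k (eraseTrace F x))
    (s₁ : HitProfile F N k g₁ i₁ m₁ a₁ y₁) (s₂ : HitProfile F N k g₂ i₂ m₂ a₂ y₂)
    (h : Set.EqOn (moveUp g₁ {a₁} i₁ N) (moveUp g₂ {a₂} i₂ N) (Set.Iic N)) :
    Set.EqOn g₁ g₂ (Set.Iic N) := by
  have := s₁.last_lt
  have := s₂.last_lt
  have := s₁.first_lt_last
  have := s₂.first_lt_last
  obtain rfl : a₁ = a₂ := s₁.graded_alpha.entersAt_unique s₁.entersAt_alpha_a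
    (s₂.entersAt_alpha_a.congr h.symm) (by omega) le_rfl
  obtain rfl : i₁ = i₂ := le_antisymm
    (first_le_of_alpha_eq (hF a₁) s₂ s₁ (h (Set.mem_Iic.2 (by omega))))
    (first_le_of_alpha_eq (hF a₁) s₁ s₂ (h (Set.mem_Iic.2 (by omega))).symm)
  exact eqOn_of_moveUp_eqOn s₁.graded s₂.graded s₁.entersAt_first s₂.entersAt_first
    s₁.one_le_first le_rfl h

lemma last_le_of_rho_eqOn (hF : IsKSperner k (eraseTrace F y))
    (s₁ : HitProfile F N k g₁ i₁ m₁ a y) (s₂ : HitProfile F N k g₂ i₂ m₂ a y)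
    (hQ₁ : ∀ l ∈ hits F N g₁, l ≠ i₁ → (g₁ l).erase a ∈ F)
    (hQ₂ : ∀ l ∈ hits F N g₂, l ≠ i₂ → (g₂ l).erase a ∈ F)
    (h : Set.EqOn (moveDown (moveUp g₁ {a} i₁ N) {y} 1 m₁)
      (moveDown (moveUp g₂ {a} i₂ N) {y} 1 m₂) (Set.Iic N))
    (hm : m₁ ≤ m₂) : m₂ ≤ m₁ := by
  have hsub : (hits F N g₁).erase i₁ ⊆ (hits F N g₂).erase i₂ := fun u hu => by
    obtain ⟨hui, huH⟩ := mem_erase.1 hu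
    obtain ⟨hiu, hum⟩ := s₁.le_of_mem huH
    refine s₂.mem_erase_hits_of_rho_erase_mem_eraseTrace hF hQ₂
      (by have := s₁.one_le_first; omega) (hum.trans hm) ?_
    rw [← h (Set.mem_Iic.2 (by have := s₁.last_lt; omega)), s₁.rho_erase_eq hiu hum]
    exact mem_eraseTrace_of_notMem (hQ₁ u huH hui) fun h' => s₁.y_notMem hum (mem_of_mem_erase h')
  have heq := eq_of_subset_of_card_le hsub (by
    rw [card_erase_of_mem s₁.first_mem, card_erase_of_mem s₂.first_mem, s₁.card_hits,
      s₂.card_hits])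
  exact s₁.le_last _ (mem_of_mem_erase (heq ▸ mem_erase.2 ⟨s₂.first_lt_last.ne', s₂.last_mem⟩))

lemma eqOn_of_rho_eqOn (hF : ∀ x, IsKSperner k (eraseTrace F x))
    (s₁ : HitProfile F N k g₁ i₁ m₁ a₁ y₁) (s₂ : HitProfile F N k g₂ i₂ m₂ a₂ y₂)
    (hQ₁ : ∀ l ∈ hits F N g₁, l ≠ i₁ → (g₁ l).erase a₁ ∈ F)
    (hQ₂ : ∀ l ∈ hits F N g₂, l ≠ i₂ → (g₂ l).erase a₂ ∈ F)
    (h : Set.EqOn (moveDown (moveUp g₁ {a₁} i₁ N) {y₁} 1 m₁)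
      (moveDown (moveUp g₂ {a₂} i₂ N) {y₂} 1 m₂) (Set.Iic N)) :
    Set.EqOn g₁ g₂ (Set.Iic N) := by
  have := s₁.last_lt
  have := s₁.first_lt_last
  have := s₂.first_lt_last
  have := s₁.one_le_first
  obtain rfl : y₁ = y₂ := s₁.graded_rho.entersAt_unique s₁.entersAt_rho_y
    (s₂.entersAt_rho_y.congr h.symm) le_rfl (by omega)
  obtain rfl : a₁ = a₂ := s₁.graded_rho.entersAt_unique s₁.entersAt_rho_a
    (s₂.entersAt_rho_a.congr h.symm) (by omega) le_rfl
  obtain rfl : m₁ = m₂ := by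
    rcases le_total m₁ m₂ with hm | hm
    · exact le_antisymm hm (last_le_of_rho_eqOn (hF y₁) s₁ s₂ hQ₁ hQ₂ h hm)
    · exact le_antisymm (last_le_of_rho_eqOn (hF y₁) s₂ s₁ hQ₂ hQ₁ h.symm hm) hm
  obtain rfl : i₁ = i₂ := by
    have := s₂.one_le_first
    refine le_antisymm (first_le_of_alpha_eq (hF a₁) s₂ s₁ ?_)
      (first_le_of_alpha_eq (hF a₁) s₁ s₂ ?_)
    · rw [← s₁.rho_erase (by omega) (by omega), ← s₂.rho_erase (by omega) (by omega),
        h (Set.mem_Iic.2 (by omega))]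
    · rw [← s₁.rho_erase (by omega) (by omega), ← s₂.rho_erase (by omega) (by omega),
        h (Set.mem_Iic.2 (by omega))]
  exact eqOn_of_moveUp_eqOn s₁.graded s₂.graded s₁.entersAt_first s₂.entersAt_first
    s₁.one_le_first le_rfl (eqOn_of_moveDown_eqOn s₁.graded_alpha s₂.graded_alpha
      s₁.entersAt_alpha_y s₂.entersAt_alpha_y le_rfl s₁.last_lt.le h)

lemma last_le_of_alpha_eqOn_rho (hF : IsKSperner k (eraseTrace F a))
    (s₁ : HitProfile F N k g₁ i₁ m₁ a y₁) (s₂ : HitProfile F N k g₂ i₂ m₂ a y₂)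
    (h : Set.EqOn (moveUp g₁ {a} i₁ N) (moveDown (moveUp g₂ {a} i₂ N) {y₂} 1 m₂) (Set.Iic N)) :
    m₁ ≤ m₂ := by
  have := s₁.last_lt
  have := s₁.first_lt_last
  by_contra! hm
  refine absurd (s₂.le_last _ (s₂.mem_hits_of_alpha_mem_eraseTrace hF (l := m₁)
    (by omega) (by omega) ?_)) (by omega)
  rw [← moveDown_eq_self (g := moveUp g₂ {a} i₂ N) (A := {y₂}) (q := 1) (p := m₂)
    (j := m₁ - 1) (by omega), ← h (Set.mem_Iic.2 (by omega)),
    s₁.alpha_sub_one (by omega) (by omega)]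
  exact erase_mem_eraseTrace (mem_hits.1 s₁.last_mem).2 a

lemma not_alpha_eqOn_rho (hF : ∀ x, IsKSperner k (eraseTrace F x))
    (s₁ : HitProfile F N k g₁ i₁ m₁ a₁ y₁) (s₂ : HitProfile F N k g₂ i₂ m₂ a₂ y₂) :
    ¬Set.EqOn (moveUp g₁ {a₁} i₁ N) (moveDown (moveUp g₂ {a₂} i₂ N) {y₂} 1 m₂) (Set.Iic N) := by
  intro h
  have := s₁.last_lt
  have := s₂.last_lt
  have := s₁.first_lt_last
  have := s₂.first_lt_last
  have := s₁.two_le_first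
  obtain rfl : a₁ = a₂ := s₁.graded_alpha.entersAt_unique s₁.entersAt_alpha_a
    (s₂.entersAt_rho_a.congr h.symm) (by omega) le_rfl
  have hm := last_le_of_alpha_eqOn_rho (hF a₁) s₁ s₂ h
  -- as `i₁ ≥ 2`, `g₁ 1` is the first level of `rho` for `g₂`, which is `{y₂}`
  have hy : ∀ j, 1 ≤ j → j ≤ N → y₂ ∈ g₁ j := fun j hj hjN => s₁.graded.mono hj hjN (by
    rw [← moveUp_eq_self (g := g₁) (A := {a₁}) (i := i₁) (p := N) (j := 1) (by omega),
      h (Set.mem_Iic.2 (by omega))]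
    exact s₂.entersAt_rho_y.mem le_rfl (by omega))
  have htop : g₁ (m₂ + 1) = g₂ (m₂ + 1) := by
    rw [← s₁.insert_alpha_sub_one (by omega) (by omega),
      ← s₂.insert_alpha_sub_one (by omega) (by omega), Nat.add_sub_cancel,
      h (Set.mem_Iic.2 (by omega)), moveDown_eq_self (by omega)]
  have := (hF y₂).card_le_of_strictMonoOn (s₁.graded.strictMonoOn_erase hy)
    (T := insert (m₂ + 1) (hits F N g₁)) (by
    intro u hu
    rcases mem_insert.1 hu with rfl | hu
    · refine ⟨⟨by omega, by omega⟩, ?_⟩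
      rw [htop, s₂.graded.erase_eq_of_entersAt s₂.entersAt_last (by omega) (by omega),
        Nat.add_sub_cancel]
      exact mem_eraseTrace_of_notMem (mem_hits.1 s₂.last_mem).2 (s₂.y_notMem le_rfl)
    · have := s₁.le_of_mem hu
      exact ⟨⟨by omega, (mem_hits.1 hu).1⟩, erase_mem_eraseTrace (mem_hits.1 hu).2 y₂⟩)
  rw [card_insert_of_notMem (fun h' => by have := s₁.le_last _ h'; omega), s₁.card_hits] at this
  omega

lemma eqOn_of_reduceChain_eqOn (hF : ∀ x, IsKSperner k (eraseTrace F x))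
    (s₁ : HitProfile F N k g₁ i₁ m₁ a₁ y₁) (s₂ : HitProfile F N k g₂ i₂ m₂ a₂ y₂)
    (h : Set.EqOn (reduceChain F N g₁) (reduceChain F N g₂) (Set.Iic N)) :
    Set.EqOn g₁ g₂ (Set.Iic N) := by
  by_cases hQ₁ : ∀ l ∈ hits F N g₁, l ≠ i₁ → (g₁ l).erase a₁ ∈ F <;>
    by_cases hQ₂ : ∀ l ∈ hits F N g₂, l ≠ i₂ → (g₂ l).erase a₂ ∈ F
  · rw [s₁.reduceChain_of_forall hQ₁, s₂.reduceChain_of_forall hQ₂] at h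
    exact eqOn_of_rho_eqOn hF s₁ s₂ hQ₁ hQ₂ h
  · rw [s₁.reduceChain_of_forall hQ₁, s₂.reduceChain_of_not_forall hQ₂] at h
    exact (not_alpha_eqOn_rho hF s₂ s₁ h.symm).elim
  · rw [s₁.reduceChain_of_not_forall hQ₁, s₂.reduceChain_of_forall hQ₂] at h
    exact (not_alpha_eqOn_rho hF s₁ s₂ h).elim
  · rw [s₁.reduceChain_of_not_forall hQ₁, s₂.reduceChain_of_not_forall hQ₂] at h
    exact eqOn_of_alpha_eqOn hF s₁ s₂ h

end HitProfile

end profile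

end TraceSperner

open TraceSperner

theorem stmt12 (n k : ℕ) (hk : 2 ≤ k) (F : Finset (Finset (Fin n)))
    (hF : ∀ x : Fin n, IsKSperner k (F.image (fun A => A.erase x)))
    (hsize : ∀ A ∈ F, 4 ≤ A.card ∧ A.card ≤ n - 1) :
    ((maxChains n).filter (fun C => (F ∩ C).card = k)).card ≤
      ((maxChains n).filter (fun C => (F ∩ C).card < k - 1)).card := by
  have hprofile : ∀ C ∈ (maxChains n).filter (fun C => #(F ∩ C) = k),
      ∃ a y, HitProfile F n k (lev C) (firstHit F n (lev C)) (lastHit F n (lev C)) a y := by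
    intro C hC
    obtain ⟨hC, hCk⟩ := mem_filter.1 hC
    have hg := isGradedChain_lev hC
    exact exists_hitProfile hg hk (by rw [← hg.card_inter_image, image_lev hC, hCk])
      fun A hA => by have := hsize A hA; omega
  refine card_le_card_of_injOn (fun C => (range (n + 1)).image (reduceChain F n (lev C)))
    (fun C hC => ?_) (fun C₁ hC₁ C₂ hC₂ h => ?_)
  · obtain ⟨a, y, s⟩ := hprofile C hC
    have := s.card_hits_reduceChain hF
    refine mem_filter.2 ⟨s.graded_reduceChain.image_mem_maxChains, ?_⟩
    rw [s.graded_reduceChain.card_inter_image]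
    omega
  · obtain ⟨a₁, y₁, s₁⟩ := hprofile C₁ hC₁
    obtain ⟨a₂, y₂, s₂⟩ := hprofile C₂ hC₂
    have hlev := HitProfile.eqOn_of_reduceChain_eqOn hF s₁ s₂ fun j hj => by
      rw [← s₁.graded_reduceChain.lev_image hj, ← s₂.graded_reduceChain.lev_image hj]
      exact congrArg (lev · j) h
    rw [← image_lev (mem_filter.1 hC₁).1, ← image_lev (mem_filter.1 hC₂).1]
    exact image_congr fun j hj => hlev (Set.mem_Iic.2 (Nat.lt_succ_iff.1 (mem_range.1 hj)))
end

section
/- Let k ≥ 3 and let F ⊆ 2^[n] be an (n−1)-trace k-Sperner family with ∅ ∈ F and [n] ∈ F. Then the subfamily F' = {F ∈ F : 2 ≤ |F| ≤ n − 2} is (n−1)-trace (k−1)-Sperner. -/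
theorem stmt14 (n k : ℕ) (hk : 3 ≤ k) (F : Finset (Finset (Fin n)))
    (hF : ∀ x : Fin n, IsKSperner k (F.image (fun A => A.erase x)))
    (hbot : ∅ ∈ F) (htop : Finset.univ ∈ F) :
    ∀ x : Fin n, IsKSperner (k - 1)
      ((F.filter (fun A => 2 ≤ A.card ∧ A.card ≤ n - 2)).image (fun A => A.erase x)) := by
  intro x
  rintro ⟨c, hc, hmem⟩
  -- each c i is nonempty and comes from F
  have hne : ∀ i, (c i).Nonempty ∧ c i ∈ F.image (fun A => A.erase x) := by
    intro i
    obtain ⟨A, hA, hAe⟩ := Finset.mem_image.mp (hmem i)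
    obtain ⟨hAF, h2, _⟩ := Finset.mem_filter.mp hA
    constructor
    · rw [← hAe, ← Finset.card_pos]
      have := Finset.pred_card_le_card_erase (a := x) (s := A)
      omega
    · exact Finset.mem_image.mpr ⟨A, hAF, hAe⟩
  apply hF x
  refine ⟨fun i => if h : (i : ℕ) = 0 then ∅ else c ⟨(i : ℕ) - 1, by omega⟩, ?_, ?_⟩
  · intro i j hij
    dsimp only
    have hij' : (i : ℕ) < (j : ℕ) := hij
    by_cases hi : (i : ℕ) = 0
    · simp only [hi, dif_pos]
      have hj : (j : ℕ) ≠ 0 := by omega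
      rw [dif_neg hj]
      exact Finset.empty_ssubset.mpr (hne _).1
    · rw [dif_neg hi, dif_neg (by omega : (j : ℕ) ≠ 0)]
      exact hc _ _ (by simp only [Fin.mk_lt_mk]; omega)
  · intro i
    dsimp only
    by_cases hi : (i : ℕ) = 0
    · rw [dif_pos hi]
      exact Finset.mem_image.mpr ⟨∅, hbot, by simp⟩
    · rw [dif_neg hi]
      exact (hne _).2
end

section
/- Let k ≥ 2, let F ⊆ 2^[n] be an (n−1)-trace k-Sperner family, and let F₀ ∈ F with 1 ≤ |F₀| ≤ 3. Then the family G = {F \ F₀ : F ∈ F, F₀ ⊆ F, |F| ≥ 5, |F| ≤ n−1}, viewed as a family of subsets of [n] \ F₀, is (n − |F₀| − 1)-trace (k−1)-Sperner. -/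
theorem stmt15 (n k : ℕ) (hk : 2 ≤ k) (F : Finset (Finset (Fin n)))
    (hF : ∀ x : Fin n, IsKSperner k (F.image (fun A => A.erase x)))
    (F₀ : Finset (Fin n)) (hF₀ : F₀ ∈ F) (h1 : 1 ≤ F₀.card) (h3 : F₀.card ≤ 3) :
    ∀ Y : Finset (Fin n), Y ⊆ Finset.univ \ F₀ → Y.card = n - F₀.card - 1 →
      IsKSperner (k - 1)
        (((F.filter (fun A => F₀ ⊆ A ∧ 5 ≤ A.card ∧ A.card ≤ n - 1)).image
          (fun A => A \ F₀)).image (fun A => A ∩ Y)) := by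
  obtain ⟨m, rfl⟩ : ∃ m, k = m + 1 := ⟨k - 1, by omega⟩
  simp only [Nat.add_sub_cancel]
  intro Y hY hcard
  rintro ⟨c, hchain, hmem⟩
  have hYF₀ : ∀ a ∈ Y, a ∉ F₀ := fun a ha => (Finset.mem_sdiff.1 (hY ha)).2
  have hA : ∀ i, ∃ A, A ∈ F ∧ (F₀ ⊆ A ∧ 5 ≤ A.card ∧ A.card ≤ n - 1) ∧
      (A \ F₀) ∩ Y = c i := by
    intro i
    have := hmem i
    simp only [Finset.mem_image, Finset.mem_filter] at this
    obtain ⟨B, ⟨A, ⟨hAF, hprop⟩, rfl⟩, hB⟩ := this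
    exact ⟨A, hAF, hprop, hB⟩
  choose A hAF hAprop hAc using hA
  have hc : ∀ i, A i ∩ Y = c i := by
    intro i
    rw [← hAc i]
    ext a
    simp only [Finset.mem_inter, Finset.mem_sdiff]
    exact ⟨fun h => ⟨⟨h.1, hYF₀ a h.2⟩, h.2⟩, fun h => ⟨h.1.1, h.2⟩⟩
  have hn5 : 5 ≤ n := le_trans (hAprop 0).2.1 (le_trans (Finset.card_le_univ _)
    (by simp))
  have hcardU : (Finset.univ \ F₀).card = n - F₀.card := by
    rw [Finset.card_sdiff_of_subset (Finset.subset_univ _), Finset.card_univ, Fintype.card_fin]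
  have hYss : Y ⊂ Finset.univ \ F₀ := by
    refine Finset.ssubset_iff_subset_ne.2 ⟨hY, fun h => ?_⟩
    rw [h, hcardU] at hcard
    omega
  obtain ⟨x, hx1, hx2⟩ := Finset.exists_of_ssubset hYss
  have hxF₀ : x ∉ F₀ := (Finset.mem_sdiff.1 hx1).2
  -- the missing element is unique
  have hone : ((Finset.univ \ F₀) \ Y).card = 1 := by
    rw [Finset.card_sdiff_of_subset hY, hcardU, hcard]; omega
  have hkey : ∀ a : Fin n, a ∉ F₀ → a ≠ x → a ∈ Y := by
    intro a haF hax
    by_contra haY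
    have hamem : a ∈ (Finset.univ \ F₀) \ Y := by
      simp [Finset.mem_sdiff, haF, haY]
    have hxmem : x ∈ (Finset.univ \ F₀) \ Y := by
      simp [Finset.mem_sdiff, hxF₀, hx2]
    obtain ⟨b, hb⟩ := Finset.card_eq_one.1 hone
    rw [hb] at hamem hxmem
    simp only [Finset.mem_singleton] at hamem hxmem
    exact hax (hamem.trans hxmem.symm)
  have herase : ∀ i, (A i).erase x = c i ∪ F₀ := by
    intro i
    ext a
    simp only [Finset.mem_erase, Finset.mem_union, ← hc i, Finset.mem_inter]
    constructor
    · rintro ⟨hax, haA⟩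
      by_cases haF : a ∈ F₀
      · exact Or.inr haF
      · exact Or.inl ⟨haA, hkey a haF hax⟩
    · rintro (⟨haA, haY⟩ | haF)
      · exact ⟨fun h => hx2 (h ▸ haY), haA⟩
      · exact ⟨fun h => hxF₀ (h ▸ haF), (hAprop i).1 haF⟩
  have hc0 : (c 0).Nonempty := by
    rw [← hc 0]
    by_contra h
    rw [Finset.not_nonempty_iff_eq_empty] at h
    have hsub : A 0 ⊆ insert x F₀ := by
      intro a ha
      simp only [Finset.mem_insert]
      by_contra hcon
      push_neg at hcon
      have : a ∈ A 0 ∩ Y := Finset.mem_inter.2 ⟨ha, hkey a hcon.2 hcon.1⟩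
      rw [h] at this
      exact absurd this (Finset.notMem_empty a)
    have := Finset.card_le_card hsub
    have := Finset.card_insert_le x F₀
    have := (hAprop 0).2.1
    omega
  have hmono : ∀ i j : Fin (m + 1), i ≤ j → c i ⊆ c j := by
    intro i j hij
    rcases eq_or_lt_of_le hij with h | h
    · rw [h]
    · exact (hchain i j h).subset
  have hcne : ∀ j : Fin (m + 1), (c j).Nonempty :=
    fun j => hc0.mono (hmono 0 j (Fin.zero_le j))
  apply hF x
  refine ⟨Fin.cases F₀ (fun i => (A i).erase x), ?_, ?_⟩
  · intro i j hij
    induction j using Fin.cases with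
    | zero => exact absurd hij (by simp [Fin.lt_iff_val_lt_val])
    | succ j =>
      induction i using Fin.cases with
      | zero =>
        simp only [Fin.cases_zero, Fin.cases_succ]
        rw [herase j]
        refine (Finset.ssubset_iff_of_subset Finset.subset_union_right).2 ?_
        obtain ⟨a, ha⟩ := hcne j
        have haY : a ∈ Y := by
          rw [← hc j] at ha
          exact (Finset.mem_inter.1 ha).2
        exact ⟨a, Finset.mem_union_left _ ha, hYF₀ a haY⟩
      | succ i =>
        simp only [Fin.cases_succ]
        rw [herase i, herase j]
        have hij' : i < j := by
          rwa [Fin.succ_lt_succ_iff] at hij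
        have hss := hchain i j hij'
        constructor
        · exact Finset.union_subset_union hss.subset le_rfl
        · intro hcon
          obtain ⟨a, haj, hai⟩ := Finset.exists_of_ssubset hss
          have haY : a ∈ Y := by
            rw [← hc j] at haj
            exact (Finset.mem_inter.1 haj).2
          have haF : a ∉ F₀ := hYF₀ a haY
          have : a ∈ c i ∪ F₀ := hcon (Finset.mem_union_left _ haj)
          rcases Finset.mem_union.1 this with h | h
          · exact hai h
          · exact haF h
  · intro i
    induction i using Fin.cases with
    | zero =>
      simp only [Fin.cases_zero]
      exact Finset.mem_image.2 ⟨F₀, hF₀, Finset.erase_eq_of_notMem hxF₀⟩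
    | succ i =>
      simp only [Fin.cases_succ]
      exact Finset.mem_image.2 ⟨A i, hAF i, rfl⟩
end

section
/- Let k ≥ 2, let F ⊆ 2^[n] be an (n−1)-trace k-Sperner family, let F₀ ∈ F with 1 ≤ |F₀| ≤ 3, and let S ⊆ F₀. Then the family G_S = {F \ F₀ : F ∈ F, F ∩ F₀ = S, 5 ≤ |F| ≤ n−1}, viewed as a family of subsets of [n] \ F₀, is (n − |F₀| − 1)-trace k-Sperner, and |G_S| equals the number of F ∈ F with F ∩ F₀ = S and 5 ≤ |F| ≤ n−1. -/
theorem stmt16 (n k : ℕ) (hk : 2 ≤ k) (F : Finset (Finset (Fin n)))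
    (hF : ∀ x : Fin n, IsKSperner k (F.image (fun A => A.erase x)))
    (F₀ : Finset (Fin n)) (hF₀ : F₀ ∈ F) (h1 : 1 ≤ F₀.card) (h3 : F₀.card ≤ 3)
    (S : Finset (Fin n)) (hS : S ⊆ F₀) :
    (∀ Y : Finset (Fin n), Y ⊆ Finset.univ \ F₀ → Y.card = n - F₀.card - 1 →
      IsKSperner k
        (((F.filter (fun A => A ∩ F₀ = S ∧ 5 ≤ A.card ∧ A.card ≤ n - 1)).image
          (fun A => A \ F₀)).image (fun A => A ∩ Y))) ∧
    ((F.filter (fun A => A ∩ F₀ = S ∧ 5 ≤ A.card ∧ A.card ≤ n - 1)).image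
      (fun A => A \ F₀)).card =
      (F.filter (fun A => A ∩ F₀ = S ∧ 5 ≤ A.card ∧ A.card ≤ n - 1)).card := by
  constructor
  · intro Y hY hYcard
    rintro ⟨c, hchain, hmem⟩
    have hYdisj : ∀ a, a ∈ Y → a ∉ F₀ := fun a ha => (Finset.mem_sdiff.mp (hY ha)).2
    have hcY : ∀ i, c i ⊆ Y := by
      intro i
      have := hmem i
      simp only [Finset.mem_image] at this
      obtain ⟨B, _, hB⟩ := this
      rw [← hB]
      exact Finset.inter_subset_right
    by_cases hx : ∃ x : Fin n, x ∉ Y ∪ F₀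
    · obtain ⟨x, hx⟩ := hx
      have hxF : x ∉ F₀ := fun h => hx (Finset.mem_union.mpr (Or.inr h))
      have hF₀lt : F₀.card < n := by
        have hss : F₀ ⊂ Finset.univ :=
          Finset.ssubset_univ_iff.mpr (fun h => hxF (h ▸ Finset.mem_univ x))
        have := Finset.card_lt_card hss
        simpa using this
      have hYF : Y ∪ F₀ = Finset.univ.erase x := by
        apply Finset.eq_of_subset_of_card_le
        · intro a ha
          exact Finset.mem_erase.mpr ⟨fun h => hx (h ▸ ha), Finset.mem_univ a⟩
        · rw [Finset.card_erase_of_mem (Finset.mem_univ x),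
            Finset.card_union_of_disjoint (Finset.disjoint_left.mpr hYdisj), hYcard]
          simp only [Finset.card_univ, Fintype.card_fin]
          omega
      have hmem' : ∀ i, ∃ A, A ∈ F ∧ A ∩ F₀ = S ∧ (A \ F₀) ∩ Y = c i := by
        intro i
        have := hmem i
        simp only [Finset.mem_image, Finset.mem_filter] at this
        obtain ⟨B, ⟨A, ⟨hAF, hAS, _⟩, rfl⟩, hB⟩ := this
        exact ⟨A, hAF, hAS, hB⟩
      choose A hAF hAS hAc using hmem'
      have key : ∀ i, (A i).erase x = c i ∪ S := by
        intro i
        ext a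
        have hax : a ≠ x ↔ (a ∈ Y ∨ a ∈ F₀) := by
          constructor
          · intro h
            have : a ∈ Finset.univ.erase x := Finset.mem_erase.mpr ⟨h, Finset.mem_univ a⟩
            rw [← hYF] at this
            exact Finset.mem_union.mp this
          · rintro h rfl
            exact hx (Finset.mem_union.mpr h)
        have hSa : a ∈ S ↔ a ∈ A i ∧ a ∈ F₀ := by
          rw [← hAS i]; simp [Finset.mem_inter]
        simp only [Finset.mem_erase, Finset.mem_union, ← hAc i, Finset.mem_inter,
          Finset.mem_sdiff]
        constructor
        · rintro ⟨hne, hai⟩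
          rcases hax.mp hne with hy | hf
          · exact Or.inl ⟨⟨hai, hYdisj a hy⟩, hy⟩
          · exact Or.inr (hSa.mpr ⟨hai, hf⟩)
        · rintro (⟨⟨hai, _⟩, hy⟩ | hs)
          · exact ⟨hax.mpr (Or.inl hy), hai⟩
          · obtain ⟨hai, hf⟩ := hSa.mp hs
            exact ⟨hax.mpr (Or.inr hf), hai⟩
      apply hF x
      refine ⟨fun i => (A i).erase x, ?_, fun i => Finset.mem_image_of_mem _ (hAF i)⟩
      intro i j hij
      show (A i).erase x ⊂ (A j).erase x
      rw [key i, key j, Finset.ssubset_def]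
      have hcij := hchain i j hij
      refine ⟨Finset.union_subset_union_left hcij.subset, fun hrev => ?_⟩
      obtain ⟨y, hyj, hyi⟩ := Finset.exists_of_ssubset hcij
      have hyY : y ∈ Y := hcY j hyj
      have : y ∈ c i ∪ S := hrev (Finset.mem_union_left _ hyj)
      rcases Finset.mem_union.mp this with h | h
      · exact hyi h
      · exact hYdisj y hyY (hS h)
    · push_neg at hx
      have hYeq : Y = Finset.univ \ F₀ := by
        apply Finset.Subset.antisymm hY
        intro a ha
        rcases Finset.mem_union.mp (hx a) with h | h
        · exact h
        · exact absurd h (Finset.mem_sdiff.mp ha).2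
      have hcard : Y.card = n - F₀.card := by
        rw [hYeq, Finset.card_sdiff_of_subset (Finset.subset_univ _)]
        simp
      have hle : F₀.card ≤ n := by
        have := Finset.card_le_card (Finset.subset_univ F₀)
        simpa using this
      have hYempty : Y = ∅ := Finset.card_eq_zero.mp (by omega)
      have h01 : c ⟨0, by omega⟩ ⊂ c ⟨1, by omega⟩ := hchain _ _ (by simp [Fin.lt_def])
      have h0 : c ⟨0, by omega⟩ = ∅ := Finset.subset_empty.mp (hYempty ▸ hcY _)
      have h1' : c ⟨1, by omega⟩ = ∅ := Finset.subset_empty.mp (hYempty ▸ hcY _)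
      rw [h0, h1'] at h01
      exact absurd h01 (by simp)
  · apply Finset.card_image_of_injOn
    intro A hA B hB hAB
    simp only [Finset.mem_coe, Finset.mem_filter] at hA hB
    have hA2 : A = (A \ F₀) ∪ S := by
      rw [← hA.2.1]; ext a; simp only [Finset.mem_union, Finset.mem_sdiff, Finset.mem_inter]
      tauto
    have hB2 : B = (B \ F₀) ∪ S := by
      rw [← hB.2.1]; ext a; simp only [Finset.mem_union, Finset.mem_sdiff, Finset.mem_inter]
      tauto
    rw [hA2, hB2, show A \ F₀ = B \ F₀ from hAB]
end
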